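/- arXiv:1106.0879 — 7 statements merged into one kernel-verified Lean document; each statement's English description precedes it below -/
import Mathlib

section
/- Let D > 2 and let θ = θ(D) ∈ (0,1) be the unique solution of 2/D = (1−θ)·θ^(θ/(1−θ)). Then θ(D) ≥ 1 − 2e/D. -/
/-!
Since `log θ ≥ 1 - 1/θ`, the exponent satisfies `θ/(1-θ) · log θ ≥ -1` on `(0,1)`, so
`θ^(θ/(1-θ)) ≥ 1/e`. The defining equation then gives `2/D ≥ (1-θ)/e`.
-/

open Real

lemma exp_neg_one_le_rpow_div_one_sub {θ : ℝ} (hθ₀ : 0 < θ) (hθ₁ : θ < 1) :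
    exp (-1) ≤ θ ^ (θ / (1 - θ)) := by
  have h1θ : 0 < 1 - θ := sub_pos.mpr hθ₁
  have hlog : θ - 1 ≤ θ * log θ := by
    have h := one_sub_inv_le_log_of_pos hθ₀
    have : θ * (1 - θ⁻¹) = θ - 1 := by field_simp
    nlinarith
  rw [rpow_def_of_pos hθ₀, exp_le_exp, mul_div_assoc', le_div_iff₀ h1θ]
  linarith

theorem stmt1_general (D θ : ℝ) (hθ : θ ∈ Set.Ioo (0 : ℝ) 1)
    (heq : 2 / D = (1 - θ) * θ ^ (θ / (1 - θ))) :
    1 - 2 * Real.exp 1 / D ≤ θ := by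
  obtain ⟨hθ₀, hθ₁⟩ := hθ
  have key : (1 - θ) * exp (-1) ≤ 2 / D :=
    heq ▸ mul_le_mul_of_nonneg_left (exp_neg_one_le_rpow_div_one_sub hθ₀ hθ₁) (by linarith)
  have : 1 - θ ≤ 2 * exp 1 / D := by
    calc 1 - θ = (1 - θ) * exp (-1) * exp 1 := by rw [mul_assoc, ← exp_add]; simp
      _ ≤ 2 / D * exp 1 := mul_le_mul_of_nonneg_right key (exp_pos 1).le
      _ = 2 * exp 1 / D := div_mul_eq_mul_div 2 D (exp 1)
  linarith

/-- If `D > 2` and `θ ∈ (0,1)` solves `2/D = (1−θ)·θ^(θ/(1−θ))`,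
then `θ ≥ 1 − 2e/D`. -/
theorem stmt1 (D θ : ℝ) (hD : 2 < D) (hθ : θ ∈ Set.Ioo (0 : ℝ) 1)
    (heq : 2 / D = (1 - θ) * θ ^ (θ / (1 - θ))) :
    1 - 2 * Real.exp 1 / D ≤ θ :=
  stmt1_general D θ hθ heq
end

section
/- Let T be a finite rooted tree and (X,d) a finite metric space. Suppose F : T → 2^X is a fragmentation map (F maps the root to X, leaves to singletons, children to subsets of their parents, and incomparable vertices to disjoint sets) which is (K,γ)-lacunary: for every q ∈ T and every weak descendant u of q with at least two children, diam(F_q) ≤ K·γ^(depth(u)−depth(q)) · min over distinct children v,w of u of d(∂F_v, ∂F_w). Then the set ∂F_root (the union of images of the leaves), with the metric d, embeds with distortion at most K into an ultrametric space. -/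
/-!
Put `ρ(x, y) := min {diam F_u : x, y ∈ ∂F_u}`. Every `ρ(x, y)` is the diameter of a set
containing `x` and `y`, so `d ≤ ρ`. The vertices whose boundary contains a given point are
ancestors of the unique leaf carrying it, hence form a chain; this gives the ultrametric
inequality. Finally, for `x ≠ y` the deepest vertex `u` with `x, y ∈ ∂F_u` has distinct children
`v, w` with `x ∈ ∂F_v`, `y ∈ ∂F_w`, and lacunarity with `q = u` bounds `ρ(x, y) ≤ diam F_u` by
`K d(x, y)`.
-/

open scoped Classical

/-- `u` is a weak ancestor of `v` (some iterate of the parent map sends `v` to `u`). -/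
def anc {V : Type*} (parent : V → V) (u v : V) : Prop := ∃ n : ℕ, parent^[n] v = u

/-- The set of children of `u` in a rooted tree given by a parent map. -/
def childrenOf {V : Type*} (parent : V → V) (root u : V) : Set V :=
  {v | parent v = u ∧ v ≠ root}

/-- `u` is a leaf: it has no children. -/
def IsTreeLeaf {V : Type*} (parent : V → V) (root u : V) : Prop :=
  childrenOf parent root u = ∅

/-- The boundary `∂F_u` of a fragmentation map: the union of `F ℓ` over the leaves `ℓ`
of the subtree rooted at `u`. -/
def bdry {V X : Type*} (parent : V → V) (root : V) (F : V → Set X) (u : V) : Set X :=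
  ⋃ ℓ ∈ {ℓ : V | IsTreeLeaf parent root ℓ ∧ anc parent u ℓ}, F ℓ

/-- `ρ` is an ultrametric on the subset `S`. -/
def IsUltrametricOn {X : Type*} (ρ : X → X → ℝ) (S : Set X) : Prop :=
  (∀ x ∈ S, ∀ y ∈ S, ρ x y = ρ y x) ∧ (∀ x ∈ S, ρ x x = 0) ∧
  (∀ x ∈ S, ∀ y ∈ S, x ≠ y → 0 < ρ x y) ∧
  (∀ x ∈ S, ∀ y ∈ S, ∀ z ∈ S, ρ x y ≤ max (ρ x z) (ρ z y))

section Tree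

variable {V : Type*} {parent : V → V} {root : V}

lemma anc_refl (u : V) : anc parent u u := ⟨0, rfl⟩

lemma anc_trans {u v w : V} (huv : anc parent u v) (hvw : anc parent v w) :
    anc parent u w := by
  obtain ⟨n, rfl⟩ := huv
  obtain ⟨m, rfl⟩ := hvw
  exact ⟨n + m, Function.iterate_add_apply parent n m w⟩

lemma anc_total_of_anc {u w ℓ : V} (hu : anc parent u ℓ) (hw : anc parent w ℓ) :
    anc parent u w ∨ anc parent w u := by
  obtain ⟨n, rfl⟩ := hu
  obtain ⟨m, rfl⟩ := hw
  rcases le_total n m with h | h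
  · exact Or.inr ⟨m - n, by rw [← Function.iterate_add_apply, Nat.sub_add_cancel h]⟩
  · exact Or.inl ⟨n - m, by rw [← Function.iterate_add_apply, Nat.sub_add_cancel h]⟩

lemma exists_mem_childrenOf_anc (hroot : parent root = root) {u a : V}
    (hua : anc parent u a) (hne : a ≠ u) :
    ∃ v ∈ childrenOf parent root u, anc parent v a := by
  set n := Nat.find hua
  have hn : parent^[n] a = u := Nat.find_spec hua
  obtain ⟨k, hk⟩ : ∃ k, n = k + 1 :=
    Nat.exists_eq_succ_of_ne_zero fun h0 => hne (by rw [← hn, h0]; rfl)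
  have hparent : parent (parent^[k] a) = u := by
    rw [← Function.iterate_succ_apply' parent k a, Nat.succ_eq_add_one, ← hk, hn]
  have hku : parent^[k] a ≠ u := Nat.find_min hua (by omega)
  refine ⟨parent^[k] a, ⟨hparent, fun hk_root => hku ?_⟩, k, rfl⟩
  rw [← hparent, hk_root, hroot]

lemma IsTreeLeaf.eq_of_anc (hroot : parent root = root) {ℓ a : V}
    (hℓ : IsTreeLeaf parent root ℓ) (hℓa : anc parent ℓ a) : a = ℓ := by
  by_contra hne
  obtain ⟨v, hv, -⟩ := exists_mem_childrenOf_anc hroot hℓa hne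
  exact (hℓ ▸ hv : v ∈ (∅ : Set V))

end Tree

section Fragmentation

variable {V X : Type*} {parent : V → V} {root : V} {F : V → Set X}

lemma mem_bdry {u : V} {x : X} :
    x ∈ bdry parent root F u ↔ ∃ ℓ, IsTreeLeaf parent root ℓ ∧ anc parent u ℓ ∧ x ∈ F ℓ := by
  simp [bdry, and_assoc]

lemma mem_bdry_of_isTreeLeaf {ℓ : V} {x : X} (hℓ : IsTreeLeaf parent root ℓ) (hx : x ∈ F ℓ) :
    x ∈ bdry parent root F ℓ :=
  mem_bdry.2 ⟨ℓ, hℓ, anc_refl ℓ, hx⟩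

lemma bdry_anti {u v : V} (huv : anc parent u v) :
    bdry parent root F v ⊆ bdry parent root F u := fun _ hx => by
  obtain ⟨ℓ, hℓ, hvℓ, hxℓ⟩ := mem_bdry.1 hx
  exact mem_bdry.2 ⟨ℓ, hℓ, anc_trans huv hvℓ, hxℓ⟩

lemma subset_of_anc (hroot : parent root = root) (hFmono : ∀ v, v ≠ root → F v ⊆ F (parent v))
    {u v : V} (huv : anc parent u v) : F v ⊆ F u := by
  obtain ⟨n, rfl⟩ := huv
  induction n generalizing v with
  | zero => exact subset_rfl
  | succ n ih =>
    by_cases hv : v = root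
    · rw [hv, Function.iterate_fixed hroot]
    · exact (hFmono v hv).trans (ih (v := parent v))

lemma bdry_subset (hroot : parent root = root) (hFmono : ∀ v, v ≠ root → F v ⊆ F (parent v))
    (u : V) : bdry parent root F u ⊆ F u := fun _ hx => by
  obtain ⟨ℓ, -, huℓ, hxℓ⟩ := mem_bdry.1 hx
  exact subset_of_anc hroot hFmono huℓ hxℓ

lemma anc_total_of_mem_bdry (hroot : parent root = root)
    (hFdisj : ∀ u v : V, ¬ anc parent u v → ¬ anc parent v u → Disjoint (F u) (F v))
    {u w : V} {z : X} (hzu : z ∈ bdry parent root F u) (hzw : z ∈ bdry parent root F w) :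
    anc parent u w ∨ anc parent w u := by
  obtain ⟨a, ha, hua, hza⟩ := mem_bdry.1 hzu
  obtain ⟨b, hb, hwb, hzb⟩ := mem_bdry.1 hzw
  have hab : a = b := by
    by_contra hne
    refine Set.disjoint_left.1 (hFdisj a b (fun h => hne ?_) (fun h => hne ?_)) hza hzb
    · exact (ha.eq_of_anc hroot h).symm
    · exact hb.eq_of_anc hroot h
  subst hab
  exact anc_total_of_anc hua hwb

lemma exists_separating_children [Finite V] (hroot : parent root = root) (depth : V → ℕ)
    (hdepth : ∀ v, v ≠ root → depth v = depth (parent v) + 1)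
    (hFleaf : ∀ v, IsTreeLeaf parent root v → ∃ x, F v = {x})
    {x y : X} (hx : x ∈ bdry parent root F root) (hy : y ∈ bdry parent root F root)
    (hxy : x ≠ y) :
    ∃ u, ∃ v ∈ childrenOf parent root u, ∃ w ∈ childrenOf parent root u, v ≠ w ∧
      x ∈ bdry parent root F v ∧ y ∈ bdry parent root F w := by
  obtain ⟨u, ⟨hxu, hyu⟩, hdeepest⟩ := Set.exists_max_image
    {u | x ∈ bdry parent root F u ∧ y ∈ bdry parent root F u} depth (Set.toFinite _) ⟨root, hx, hy⟩
  obtain ⟨a, ha, hua, hxa⟩ := mem_bdry.1 hxu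
  obtain ⟨b, hb, hub, hyb⟩ := mem_bdry.1 hyu
  have hab : a ≠ b := by
    rintro rfl
    obtain ⟨z, hz⟩ := hFleaf a ha
    rw [hz] at hxa hyb
    exact hxy (hxa.trans hyb.symm)
  have hau : a ≠ u := by
    rintro rfl
    exact hab (ha.eq_of_anc hroot hub).symm
  have hbu : b ≠ u := by
    rintro rfl
    exact hab (hb.eq_of_anc hroot hua)
  obtain ⟨v, hv, hva⟩ := exists_mem_childrenOf_anc hroot hua hau
  obtain ⟨w, hw, hwb⟩ := exists_mem_childrenOf_anc hroot hub hbu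
  have hxv : x ∈ bdry parent root F v := mem_bdry.2 ⟨a, ha, hva, hxa⟩
  have hyw : y ∈ bdry parent root F w := mem_bdry.2 ⟨b, hb, hwb, hyb⟩
  refine ⟨u, v, hv, w, hw, fun hvw => ?_, hxv, hyw⟩
  have := hdeepest v ⟨hxv, hvw ▸ hyw⟩
  rw [hdepth v hv.2, hv.1] at this
  omega

end Fragmentation

section FragDist

variable {V X : Type*} [MetricSpace X] {parent : V → V} {root : V} {F : V → Set X}

variable (parent root F) in
noncomputable def fragDist (x y : X) : ℝ :=
  sInf ((fun u => Metric.diam (F u)) ''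
    {u | x ∈ bdry parent root F u ∧ y ∈ bdry parent root F u})

lemma fragDist_comm (x y : X) : fragDist parent root F x y = fragDist parent root F y x := by
  simp only [fragDist, and_comm]

lemma fragDist_le_diam [Finite V] {x y : X} {u : V} (hx : x ∈ bdry parent root F u)
    (hy : y ∈ bdry parent root F u) : fragDist parent root F x y ≤ Metric.diam (F u) :=
  csInf_le (Set.toFinite _).bddBelow ⟨u, ⟨hx, hy⟩, rfl⟩

lemma exists_fragDist_eq_diam [Finite V] {x y : X} (hx : x ∈ bdry parent root F root)
    (hy : y ∈ bdry parent root F root) :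
    ∃ u, x ∈ bdry parent root F u ∧ y ∈ bdry parent root F u ∧
      fragDist parent root F x y = Metric.diam (F u) := by
  have hne : {u | x ∈ bdry parent root F u ∧ y ∈ bdry parent root F u}.Nonempty :=
    ⟨root, hx, hy⟩
  obtain ⟨u, ⟨hxu, hyu⟩, hu⟩ := (hne.image (fun u => Metric.diam (F u))).csInf_mem
    (Set.toFinite _)
  exact ⟨u, hxu, hyu, hu.symm⟩

lemma dist_le_fragDist [Finite V] [Finite X] (hroot : parent root = root)
    (hFmono : ∀ v, v ≠ root → F v ⊆ F (parent v)) {x y : X}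
    (hx : x ∈ bdry parent root F root) (hy : y ∈ bdry parent root F root) :
    dist x y ≤ fragDist parent root F x y := by
  obtain ⟨u, hxu, hyu, hu⟩ := exists_fragDist_eq_diam hx hy
  rw [hu]
  exact Metric.dist_le_diam_of_mem (Set.toFinite _).isBounded
    (bdry_subset hroot hFmono u hxu) (bdry_subset hroot hFmono u hyu)

lemma fragDist_self [Finite V] [Finite X] (hroot : parent root = root)
    (hFmono : ∀ v, v ≠ root → F v ⊆ F (parent v))
    (hFleaf : ∀ v, IsTreeLeaf parent root v → ∃ x, F v = {x})
    {x : X} (hx : x ∈ bdry parent root F root) : fragDist parent root F x x = 0 := by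
  obtain ⟨a, ha, -, hxa⟩ := mem_bdry.1 hx
  obtain ⟨z, hz⟩ := hFleaf a ha
  have hle : fragDist parent root F x x ≤ Metric.diam (F a) :=
    fragDist_le_diam (mem_bdry_of_isTreeLeaf ha hxa) (mem_bdry_of_isTreeLeaf ha hxa)
  rw [hz, Metric.diam_singleton] at hle
  exact le_antisymm hle (dist_self x ▸ dist_le_fragDist hroot hFmono hx hx)

lemma fragDist_le_max [Finite V] (hroot : parent root = root)
    (hFdisj : ∀ u v : V, ¬ anc parent u v → ¬ anc parent v u → Disjoint (F u) (F v))
    {x y z : X} (hx : x ∈ bdry parent root F root) (hy : y ∈ bdry parent root F root)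
    (hz : z ∈ bdry parent root F root) :
    fragDist parent root F x y ≤ max (fragDist parent root F x z) (fragDist parent root F z y) := by
  obtain ⟨u, hxu, hzu, hu⟩ := exists_fragDist_eq_diam hx hz
  obtain ⟨w, hzw, hyw, hw⟩ := exists_fragDist_eq_diam hz hy
  rcases anc_total_of_mem_bdry hroot hFdisj hzu hzw with huw | hwu
  · calc fragDist parent root F x y ≤ Metric.diam (F u) := fragDist_le_diam hxu (bdry_anti huw hyw)
      _ ≤ _ := hu ▸ le_max_left _ _
  · calc fragDist parent root F x y ≤ Metric.diam (F w) := fragDist_le_diam (bdry_anti hwu hxu) hyw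
      _ ≤ _ := hw ▸ le_max_right _ _

lemma fragDist_le_mul_dist [Finite V] [Finite X] (hroot : parent root = root) (depth : V → ℕ)
    (hdepth : ∀ v, v ≠ root → depth v = depth (parent v) + 1)
    (hFleaf : ∀ v, IsTreeLeaf parent root v → ∃ x, F v = {x})
    (hFmono : ∀ v, v ≠ root → F v ⊆ F (parent v)) {K : ℝ}
    (hsep : ∀ u, ∀ v ∈ childrenOf parent root u, ∀ w ∈ childrenOf parent root u, v ≠ w →
      ∀ x ∈ bdry parent root F v, ∀ y ∈ bdry parent root F w, Metric.diam (F u) ≤ K * dist x y)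
    {x y : X} (hx : x ∈ bdry parent root F root) (hy : y ∈ bdry parent root F root) :
    fragDist parent root F x y ≤ K * dist x y := by
  by_cases hxy : x = y
  · rw [hxy, fragDist_self hroot hFmono hFleaf hy, dist_self, mul_zero]
  obtain ⟨u, v, hv, w, hw, hvw, hxv, hyw⟩ :=
    exists_separating_children hroot depth hdepth hFleaf hx hy hxy
  calc fragDist parent root F x y ≤ Metric.diam (F u) :=
        fragDist_le_diam (bdry_anti ⟨1, hv.1⟩ hxv) (bdry_anti ⟨1, hw.1⟩ hyw)
    _ ≤ K * dist x y := hsep u v hv w hw hvw x hxv y hyw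

lemma isUltrametricOn_fragDist [Finite V] [Finite X] (hroot : parent root = root)
    (hFleaf : ∀ v, IsTreeLeaf parent root v → ∃ x, F v = {x})
    (hFmono : ∀ v, v ≠ root → F v ⊆ F (parent v))
    (hFdisj : ∀ u v : V, ¬ anc parent u v → ¬ anc parent v u → Disjoint (F u) (F v)) :
    IsUltrametricOn (fragDist parent root F) (bdry parent root F root) :=
  ⟨fun x _ y _ => fragDist_comm x y, fun _ hx => fragDist_self hroot hFmono hFleaf hx,
    fun _ hx _ hy hxy => (dist_pos.2 hxy).trans_le (dist_le_fragDist hroot hFmono hx hy),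
    fun _ hx _ hy _ hz => fragDist_le_max hroot hFdisj hx hy hz⟩

end FragDist

theorem stmt2_general {V X : Type*} [Fintype V] [Fintype X] [MetricSpace X]
    (root : V) (parent : V → V) (depth : V → ℕ)
    (hparent_root : parent root = root)
    (hdepth : ∀ v, v ≠ root → depth v = depth (parent v) + 1)
    (F : V → Set X) (K γ : ℝ)
    (hFleaf : ∀ v, IsTreeLeaf parent root v → ∃ x, F v = {x})
    (hFmono : ∀ v, v ≠ root → F v ⊆ F (parent v))
    (hFdisj : ∀ u v : V, ¬ anc parent u v → ¬ anc parent v u → Disjoint (F u) (F v))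
    (hlac : ∀ q u : V, anc parent q u →
      ∀ v w : V, v ∈ childrenOf parent root u → w ∈ childrenOf parent root u → v ≠ w →
        ∀ x ∈ bdry parent root F v, ∀ y ∈ bdry parent root F w,
          Metric.diam (F q) ≤ K * γ ^ (depth u - depth q) * dist x y) :
    ∃ ρ : X → X → ℝ,
      IsUltrametricOn ρ (bdry parent root F root) ∧
      ∀ x ∈ bdry parent root F root, ∀ y ∈ bdry parent root F root,
        dist x y ≤ ρ x y ∧ ρ x y ≤ K * dist x y := by
  have hsep : ∀ u, ∀ v ∈ childrenOf parent root u, ∀ w ∈ childrenOf parent root u, v ≠ w →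
      ∀ x ∈ bdry parent root F v, ∀ y ∈ bdry parent root F w,
        Metric.diam (F u) ≤ K * dist x y := fun u v hv w hw hvw x hx y hy => by
    simpa using hlac u u (anc_refl u) v w hv hw hvw x hx y hy
  exact ⟨fragDist parent root F,
    isUltrametricOn_fragDist hparent_root hFleaf hFmono hFdisj, fun x hx y hy =>
      ⟨dist_le_fragDist hparent_root hFmono hx hy,
        fragDist_le_mul_dist hparent_root depth hdepth hFleaf hFmono hsep hx hy⟩⟩

/-- If `F : T → 2^X` is a `(K,γ)`-lacunary fragmentation map of a finite
metric space `X` on a finite rooted tree `T`, then `∂F_{root}` embeds with distortion at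
most `K` into an ultrametric space. -/
theorem stmt2 {V X : Type*} [Fintype V] [DecidableEq V] [Fintype X] [MetricSpace X]
    (root : V) (parent : V → V) (depth : V → ℕ)
    (hparent_root : parent root = root)
    (hdepth_root : depth root = 0)
    (hdepth : ∀ v, v ≠ root → depth v = depth (parent v) + 1)
    (F : V → Set X) (K γ : ℝ) (hK : 0 < K) (hγ : 0 < γ)
    (hFroot : F root = Set.univ)
    (hFleaf : ∀ v, IsTreeLeaf parent root v → ∃ x, F v = {x})
    (hFmono : ∀ v, v ≠ root → F v ⊆ F (parent v))
    (hFdisj : ∀ u v : V, ¬ anc parent u v → ¬ anc parent v u → Disjoint (F u) (F v))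
    (hlac : ∀ q u : V, anc parent q u →
      ∀ v w : V, v ∈ childrenOf parent root u → w ∈ childrenOf parent root u → v ≠ w →
        ∀ x ∈ bdry parent root F v, ∀ y ∈ bdry parent root F w,
          Metric.diam (F q) ≤ K * γ ^ (depth u - depth q) * dist x y) :
    ∃ ρ : X → X → ℝ,
      IsUltrametricOn ρ (bdry parent root F root) ∧
      ∀ x ∈ bdry parent root F root, ∀ y ∈ bdry parent root F root,
        dist x y ≤ ρ x y ∧ ρ x y ≤ K * dist x y :=
  stmt2_general root parent depth hparent_root hdepth F K γ hFleaf hFmono hFdisj hlac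
end

section
/- Let (n_k)_{k≥0} be a sequence of positive integers with n_0 = 1 and n_k ≥ 2 for k ≥ 1. For each k ≥ 1 let d_k be a metric on {1,…,n_k} with diameter 1 and minimal positive distance δ_k, and fix α > 0. Define ρ_α on the product ∏_{k≥1}{1,…,n_k} by: for distinct x,y, letting k(x,y) be the first coordinate where they differ, ρ_α(x,y) = d_{k(x,y)}(x_{k(x,y)}, y_{k(x,y)}) / ∏_{i=0}^{k(x,y)−1} n_i^{1/α}. If δ_k > n_k^{−1/α} for all k, then ρ_α is a metric on the product and the resulting metric space is compact. -/
/-!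
Two points whose first difference is at level `m` are at distance in `(1 / Q (m + 1), 1 / Q m]`,
where `Q m = (n₀ ⋯ nₘ)^{1/α}`: the upper bound is `d ≤ 1`, the lower bound is exactly
`δ_{m+1} > n_{m+1}^{-1/α}`. So a later first difference means a strictly smaller distance,
and the triangle inequality reduces to that of `d` at the level where `x` and `z` first differ.
Since `Q m → ∞`, every `ρ_α`-ball contains a cylinder, i.e. the identity from the product
topology to the metric topology is continuous; compactness then follows from Tychonoff.
-/

open scoped Classical

noncomputable def firstDiff {n : ℕ → ℕ} (x y : ∀ k : ℕ, Fin (n (k + 1))) (h : x ≠ y) : ℕ :=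
  Nat.find (Function.ne_iff.mp h)

/-- The tree metric `ρ_α` on `∏_{k≥1} {1,…,n_k}`: for distinct `x,y`, with `m` the first
differing coordinate (so the paper's `k(x,y) = m+1`),
`ρ_α(x,y) = d_{k(x,y)}(x,y) / (∏_{i=0}^{k(x,y)−1} n_i)^{1/α}`. -/
noncomputable def rhoAlpha (n : ℕ → ℕ)
    (d : ∀ k : ℕ, Fin (n (k + 1)) → Fin (n (k + 1)) → ℝ) (α : ℝ)
    (x y : ∀ k : ℕ, Fin (n (k + 1))) : ℝ :=
  if h : x = y then 0
  else
    d (firstDiff x y h) (x (firstDiff x y h)) (y (firstDiff x y h)) /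
      (∏ i ∈ Finset.range (firstDiff x y h + 1), (n i : ℝ)) ^ ((1 : ℝ) / α)

open Filter Topology Finset

theorem PseudoMetricSpace.compactSpace_of_eventually_dist_lt {X : Type*}
    [t : TopologicalSpace X] [CompactSpace X] (m : PseudoMetricSpace X)
    (h : ∀ x, ∀ ε > 0, ∀ᶠ y in 𝓝 x, m.dist x y < ε) :
    @CompactSpace X m.toUniformSpace.toTopologicalSpace := by
  have hle : t ≤ m.toUniformSpace.toTopologicalSpace := by
    refine (le_iff_nhds _ _).2 fun x => ?_
    refine (@Metric.nhds_basis_ball X m x).ge_iff.2 fun ε hε => ?_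
    filter_upwards [h x ε hε] with y hy
    rwa [@Metric.mem_ball' X m]
  exact @Function.surjective_id.compactSpace X X t m.toUniformSpace.toTopologicalSpace _
    (continuous_id_iff_le.2 hle) _

variable {n : ℕ → ℕ}

section firstDiff

variable {x y : ∀ k, Fin (n (k + 1))}

theorem apply_firstDiff_ne (h : x ≠ y) : x (firstDiff x y h) ≠ y (firstDiff x y h) :=
  Nat.find_spec (Function.ne_iff.mp h)

theorem eq_of_lt_firstDiff (h : x ≠ y) {i : ℕ} (hi : i < firstDiff x y h) : x i = y i :=
  not_not.1 (Nat.find_min (Function.ne_iff.mp h) hi)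

theorem firstDiff_eq (h : x ≠ y) {m : ℕ} (hagree : ∀ i < m, x i = y i) (hm : x m ≠ y m) :
    firstDiff x y h = m :=
  (Nat.find_eq_iff _).2 ⟨hm, fun i hi => not_not.2 (hagree i hi)⟩

theorem le_firstDiff (h : x ≠ y) {m : ℕ} (hagree : ∀ i < m, x i = y i) : m ≤ firstDiff x y h :=
  (Nat.le_find_iff _ _).2 fun i hi => not_not.2 (hagree i hi)

theorem firstDiff_comm (h : x ≠ y) : firstDiff y x h.symm = firstDiff x y h :=
  firstDiff_eq h.symm (fun _ hi => (eq_of_lt_firstDiff h hi).symm) (apply_firstDiff_ne h).symm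

end firstDiff

noncomputable def levelScale (n : ℕ → ℕ) (α : ℝ) (m : ℕ) : ℝ :=
  (∏ i ∈ range (m + 1), (n i : ℝ)) ^ ((1 : ℝ) / α)

section levelScale

variable {α : ℝ}

theorem levelScale_nonneg (m : ℕ) : 0 ≤ levelScale n α m := by
  unfold levelScale; positivity

theorem levelScale_pos (hpos : ∀ i, 0 < n i) (m : ℕ) : 0 < levelScale n α m :=
  Real.rpow_pos_of_pos (prod_pos fun i _ => Nat.cast_pos.2 (hpos i)) _

theorem levelScale_succ (m : ℕ) :
    levelScale n α (m + 1) = levelScale n α m * (n (m + 1) : ℝ) ^ ((1 : ℝ) / α) := by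
  rw [levelScale, prod_range_succ, Real.mul_rpow (by positivity) (by positivity), levelScale]

theorem levelScale_mono (hpos : ∀ i, 0 < n i) (hα : 0 ≤ α) : Monotone (levelScale n α) :=
  monotone_nat_of_le_succ fun m => by
    rw [levelScale_succ]
    exact le_mul_of_one_le_right (levelScale_nonneg m)
      (Real.one_le_rpow (Nat.one_le_cast.2 (hpos _)) (by positivity))

theorem inv_levelScale_succ_lt_div (hpos : ∀ i, 0 < n i) {m : ℕ} {t : ℝ}
    (ht : (n (m + 1) : ℝ) ^ (-(1 : ℝ) / α) < t) :
    (levelScale n α (m + 1))⁻¹ < t / levelScale n α m := by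
  calc (levelScale n α (m + 1))⁻¹ = (n (m + 1) : ℝ) ^ (-(1 : ℝ) / α) / levelScale n α m := by
        rw [levelScale_succ, neg_div, Real.rpow_neg (Nat.cast_nonneg _), mul_inv, inv_mul_eq_div]
    _ < t / levelScale n α m := div_lt_div_of_pos_right ht (levelScale_pos hpos m)

theorem two_pow_le_prod_range (h0 : 0 < n 0) (hn : ∀ k, 1 ≤ k → 2 ≤ n k) (m : ℕ) :
    (2 : ℝ) ^ m ≤ ∏ i ∈ range (m + 1), (n i : ℝ) := by
  induction m with
  | zero => simpa using Nat.succ_le_of_lt h0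
  | succ m ih =>
    rw [prod_range_succ, pow_succ]
    gcongr
    exact_mod_cast hn (m + 1) (Nat.le_add_left 1 m)

theorem tendsto_levelScale_atTop (h0 : 0 < n 0) (hn : ∀ k, 1 ≤ k → 2 ≤ n k) (hα : 0 < α) :
    Tendsto (levelScale n α) atTop atTop :=
  (tendsto_rpow_atTop (one_div_pos.2 hα)).comp <|
    tendsto_atTop_mono (two_pow_le_prod_range h0 hn) (tendsto_pow_atTop_atTop_of_one_lt one_lt_two)

end levelScale

section rhoAlpha

variable {d : ∀ k : ℕ, Fin (n (k + 1)) → Fin (n (k + 1)) → ℝ} {α : ℝ}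
  {x y : ∀ k, Fin (n (k + 1))}

theorem rhoAlpha_self (x : ∀ k, Fin (n (k + 1))) : rhoAlpha n d α x x = 0 :=
  dif_pos rfl

theorem rhoAlpha_of_ne (h : x ≠ y) :
    rhoAlpha n d α x y =
      d (firstDiff x y h) (x (firstDiff x y h)) (y (firstDiff x y h)) /
        levelScale n α (firstDiff x y h) :=
  dif_neg h

theorem rhoAlpha_eq_div (h : x ≠ y) {m : ℕ} (hagree : ∀ i < m, x i = y i) (hm : x m ≠ y m) :
    rhoAlpha n d α x y = d m (x m) (y m) / levelScale n α m := by
  rw [rhoAlpha_of_ne h, firstDiff_eq h hagree hm]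

theorem rhoAlpha_comm (hd_symm : ∀ k i j, d k i j = d k j i) (x y : ∀ k, Fin (n (k + 1))) :
    rhoAlpha n d α x y = rhoAlpha n d α y x := by
  by_cases h : x = y
  · rw [h]
  rw [rhoAlpha_of_ne h, rhoAlpha_of_ne (Ne.symm h), firstDiff_comm h, hd_symm]

theorem rhoAlpha_le_inv_levelScale (hd_le : ∀ k i j, d k i j ≤ 1) (h : x ≠ y) :
    rhoAlpha n d α x y ≤ (levelScale n α (firstDiff x y h))⁻¹ := by
  rw [rhoAlpha_of_ne h, ← one_div]
  exact div_le_div_of_nonneg_right (hd_le _ _ _) (levelScale_nonneg _)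

theorem rhoAlpha_pos (hpos : ∀ i, 0 < n i)
    (hsep : ∀ k i j, i ≠ j → (n (k + 1) : ℝ) ^ (-(1 : ℝ) / α) < d k i j) (h : x ≠ y) :
    0 < rhoAlpha n d α x y := by
  rw [rhoAlpha_of_ne h]
  exact div_pos ((Real.rpow_nonneg (Nat.cast_nonneg _) _).trans_lt (hsep _ _ _
    (apply_firstDiff_ne h))) (levelScale_pos hpos _)

theorem rhoAlpha_nonneg (hpos : ∀ i, 0 < n i)
    (hsep : ∀ k i j, i ≠ j → (n (k + 1) : ℝ) ^ (-(1 : ℝ) / α) < d k i j)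
    (x y : ∀ k, Fin (n (k + 1))) : 0 ≤ rhoAlpha n d α x y := by
  by_cases h : x = y
  · rw [h, rhoAlpha_self]
  · exact (rhoAlpha_pos hpos hsep h).le

theorem rhoAlpha_lt_of_firstDiff_lt (hpos : ∀ i, 0 < n i)
    (hsep : ∀ k i j, i ≠ j → (n (k + 1) : ℝ) ^ (-(1 : ℝ) / α) < d k i j) (hα : 0 ≤ α)
    (hd_le : ∀ k i j, d k i j ≤ 1) {x' y' : ∀ k, Fin (n (k + 1))} (h : x ≠ y) (h' : x' ≠ y')
    (hlt : firstDiff x y h < firstDiff x' y' h') :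
    rhoAlpha n d α x' y' < rhoAlpha n d α x y := by
  calc rhoAlpha n d α x' y' ≤ (levelScale n α (firstDiff x' y' h'))⁻¹ :=
        rhoAlpha_le_inv_levelScale hd_le h'
    _ ≤ (levelScale n α (firstDiff x y h + 1))⁻¹ :=
        inv_anti₀ (levelScale_pos hpos _) (levelScale_mono hpos hα hlt)
    _ < rhoAlpha n d α x y := by
        rw [rhoAlpha_of_ne h]
        exact inv_levelScale_succ_lt_div hpos (hsep _ _ _ (apply_firstDiff_ne h))

theorem rhoAlpha_triangle (hpos : ∀ i, 0 < n i)
    (hsep : ∀ k i j, i ≠ j → (n (k + 1) : ℝ) ^ (-(1 : ℝ) / α) < d k i j) (hα : 0 ≤ α)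
    (hd_tri : ∀ k i j l, d k i l ≤ d k i j + d k j l) (hd_le : ∀ k i j, d k i j ≤ 1)
    (x y z : ∀ k, Fin (n (k + 1))) :
    rhoAlpha n d α x z ≤ rhoAlpha n d α x y + rhoAlpha n d α y z := by
  have hρ_nonneg := rhoAlpha_nonneg hpos hsep
  by_cases hxz : x = z
  · rw [hxz, rhoAlpha_self]
    exact add_nonneg (hρ_nonneg _ _) (hρ_nonneg _ _)
  by_cases hxy : x = y
  · rw [hxy, rhoAlpha_self, zero_add]
  by_cases hyz : y = z
  · rw [hyz, rhoAlpha_self, add_zero]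
  set c := firstDiff x z hxz
  by_cases hac : firstDiff x y hxy < c
  · exact (rhoAlpha_lt_of_firstDiff_lt hpos hsep hα hd_le hxy hxz hac).le.trans
      (le_add_of_nonneg_right (hρ_nonneg _ _))
  by_cases hbc : firstDiff y z hyz < c
  · exact (rhoAlpha_lt_of_firstDiff_lt hpos hsep hα hd_le hyz hxz hbc).le.trans
      (le_add_of_nonneg_left (hρ_nonneg _ _))
  have hxy_c : ∀ i < c, x i = y i := fun i hi =>
    eq_of_lt_firstDiff hxy (hi.trans_le (not_lt.1 hac))
  have hyz_c : ∀ i < c, y i = z i := fun i hi =>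
    eq_of_lt_firstDiff hyz (hi.trans_le (not_lt.1 hbc))
  have hxz_c : x c ≠ z c := apply_firstDiff_ne hxz
  rw [rhoAlpha_eq_div hxz (fun i hi => (hxy_c i hi).trans (hyz_c i hi)) hxz_c]
  by_cases hx : x c = y c
  · rw [rhoAlpha_eq_div hyz hyz_c (hx ▸ hxz_c), hx]
    exact le_add_of_nonneg_left (hρ_nonneg _ _)
  by_cases hz : y c = z c
  · rw [rhoAlpha_eq_div hxy hxy_c hx, hz]
    exact le_add_of_nonneg_right (hρ_nonneg _ _)
  rw [rhoAlpha_eq_div hxy hxy_c hx, rhoAlpha_eq_div hyz hyz_c hz, ← add_div]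
  exact div_le_div_of_nonneg_right (hd_tri _ _ _ _) (levelScale_nonneg c)

end rhoAlpha

theorem eventually_rhoAlpha_lt {d : ∀ k : ℕ, Fin (n (k + 1)) → Fin (n (k + 1)) → ℝ} {α : ℝ}
    (h0 : 0 < n 0) (hn : ∀ k, 1 ≤ k → 2 ≤ n k) (hα : 0 < α) (hd_le : ∀ k i j, d k i j ≤ 1)
    (x : ∀ k, Fin (n (k + 1))) {ε : ℝ} (hε : 0 < ε) :
    ∀ᶠ y in 𝓝 x, rhoAlpha n d α x y < ε := by
  obtain ⟨N, hN⟩ := eventually_atTop.1 <|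
    (tendsto_inv_atTop_zero.comp (tendsto_levelScale_atTop h0 hn hα)).eventually (gt_mem_nhds hε)
  have hcyl : ∀ᶠ y in 𝓝 x, ∀ i ∈ range N, y i = x i :=
    (eventually_all_finset _).2 fun i _ =>
      (continuous_apply i).continuousAt.eventually_mem ((isOpen_discrete {x i}).mem_nhds rfl)
  filter_upwards [hcyl] with y hy
  by_cases h : x = y
  · rwa [h, rhoAlpha_self]
  exact (rhoAlpha_le_inv_levelScale hd_le h).trans_lt
    (hN _ (le_firstDiff h fun i hi => (hy i (mem_range.2 hi)).symm))

theorem stmt3_general (n : ℕ → ℕ) (hn0 : n 0 = 1) (hn : ∀ k, 1 ≤ k → 2 ≤ n k)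
    (d : ∀ k : ℕ, Fin (n (k + 1)) → Fin (n (k + 1)) → ℝ)
    (hd_symm : ∀ k i j, d k i j = d k j i)
    (hd_tri : ∀ k i j l, d k i l ≤ d k i j + d k j l)
    (hd_le : ∀ k i j, d k i j ≤ 1)
    (δ : ℕ → ℝ)
    (hδ_min : ∀ k i j, i ≠ j → δ (k + 1) ≤ d k i j)
    (α : ℝ) (hα : 0 < α)
    (hδ_big : ∀ k : ℕ, ((n (k + 1) : ℝ)) ^ (-(1 : ℝ) / α) < δ (k + 1)) :
    ∃ m : MetricSpace (∀ k : ℕ, Fin (n (k + 1))),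
      (∀ x y, m.dist x y = rhoAlpha n d α x y) ∧
      @CompactSpace _ m.toUniformSpace.toTopologicalSpace := by
  have h0 : 0 < n 0 := hn0 ▸ Nat.one_pos
  have hpos : ∀ i, 0 < n i := fun i =>
    i.eq_zero_or_pos.elim (fun hi => hi ▸ h0) fun hi => (hn i hi).trans_lt' two_pos
  have hsep : ∀ k i j, i ≠ j → (n (k + 1) : ℝ) ^ (-(1 : ℝ) / α) < d k i j :=
    fun k i j hij => (hδ_big k).trans_le (hδ_min k i j hij)
  let m : MetricSpace (∀ k : ℕ, Fin (n (k + 1))) :=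
    { dist := rhoAlpha n d α
      dist_self := rhoAlpha_self
      dist_comm := rhoAlpha_comm hd_symm
      dist_triangle := rhoAlpha_triangle hpos hsep hα.le hd_tri hd_le
      eq_of_dist_eq_zero := fun {x y} hxy => by_contra fun h => (rhoAlpha_pos hpos hsep h).ne' hxy }
  exact ⟨m, fun _ _ => rfl, m.compactSpace_of_eventually_dist_lt fun x _ hε =>
    eventually_rhoAlpha_lt h0 hn hα hd_le x hε⟩

/-- With `n_0 = 1`, `n_k ≥ 2`, metrics `d_k` on `{1,…,n_k}` of diameter `1`
and minimal positive distance `δ_k`, and `δ_k > n_k^{−1/α}` for all `k`, the function `ρ_α`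
is a metric on `∏_{k≥1} {1,…,n_k}` and the resulting metric space is compact. -/
theorem stmt3 (n : ℕ → ℕ) (hn0 : n 0 = 1) (hn : ∀ k, 1 ≤ k → 2 ≤ n k)
    (d : ∀ k : ℕ, Fin (n (k + 1)) → Fin (n (k + 1)) → ℝ)
    (hd_symm : ∀ k i j, d k i j = d k j i)
    (hd_self : ∀ k i, d k i i = 0)
    (hd_tri : ∀ k i j l, d k i l ≤ d k i j + d k j l)
    (hd_le : ∀ k i j, d k i j ≤ 1)
    (hd_diam : ∀ k, ∃ i j, d k i j = 1)
    (δ : ℕ → ℝ)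
    (hδ_min : ∀ k i j, i ≠ j → δ (k + 1) ≤ d k i j)
    (hδ_att : ∀ k, ∃ i j, i ≠ j ∧ d k i j = δ (k + 1))
    (α : ℝ) (hα : 0 < α)
    (hδ_big : ∀ k : ℕ, ((n (k + 1) : ℝ)) ^ (-(1 : ℝ) / α) < δ (k + 1)) :
    ∃ m : MetricSpace (∀ k : ℕ, Fin (n (k + 1))),
      (∀ x y, m.dist x y = rhoAlpha n d α x y) ∧
      @CompactSpace _ m.toUniformSpace.toTopologicalSpace :=
  stmt3_general n hn0 hn d hd_symm hd_tri hd_le δ hδ_min α hα hδ_big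
end

section
/- Fix integers h ≥ k ≥ 2. Let T be a finite rooted tree all of whose leaves are at depth h, let w : T → (0,∞) satisfy w(u) ≤ ∑_{v child of u} w(v) for every non-leaf u, and suppose each non-leaf u has a designated child c(u) maximizing the modified weight w_h^k among children of u, where w_h^k(v) = ∑_{leaves ℓ below v} w(ℓ)^((k−1)/k) (this equals the formula since all leaves are at depth h ≤ h). For i ∈ {1,…,h} let T^(i) be the subtree obtained from T by deleting, for every vertex u at depth i−1, all subtrees rooted at non-designated children of u. Then there exists a set L ⊆ {1,…,h} with |L| ≥ h−k+1 such that for every i ∈ L, ∑_{ℓ ∈ L(T^(i))} w(ℓ)^((k−1)/k) ≥ w(r)^((k−1)/k), where r is the root of T and L(T^(i)) is the set of leaves of T^(i). -/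
open scoped Classical

/-- The modified weight of a vertex `v` in a tree of height `h`:
`∑_{leaves ℓ below v} w(ℓ)^e`. -/
noncomputable def leafSum {V : Type*} [Fintype V] (parent : V → V) (root : V)
    (w : V → ℝ) (e : ℝ) (v : V) : ℝ :=
  ∑ ℓ ∈ Finset.univ.filter (fun ℓ => IsTreeLeaf parent root ℓ ∧ anc parent v ℓ), w ℓ ^ e

/-!
Write `e = (k-1)/k`, `g(v) = ∑_{ℓ leaf below v} w(ℓ)^e`, and `W_i = ∑_{depth p = i-1} g(c p)`
for the leaf sum of `T^(i)`. Subadditivity of `w` and of `x ↦ x^e` give `w(v)^e ≤ g(v)`, and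
writing `w(x) = (w(x)^e)^{1/(k-1)} w(x)^e` for the children `x` of `u` gives
`w(u) ≤ g(c u)^{1/(k-1)} g(u)`. Suppose `W_i < w(r)^e` for `k` indices `i_0 < ⋯ < i_{k-1}`.
Push `w(r)` down to depth `i_{k-1} - 1` and bound `S_m = ∑_{depth u = i_m - 1} g(c u)^{1/m} g(u)`
by `(W_{i_0} ⋯ W_{i_m})^{1/m}` by induction on `m`: Hölder's inequality with exponent `m + 1`
splits off `W_{i_{m+1}}^{1/(m+1)}` and leaves `∑_u g(u)^{1+1/m}`, which is at most `S_m` because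
`g(u) ≤ g(c p)` for the ancestor `p` of `u` at depth `i_m - 1`. Hence
`w(r)^{k-1} ≤ ∏_t W_{i_t} < w(r)^{k-1}`.
-/

open Finset

theorem rpow_sum_le_sum_rpow {ι : Type*} (s : Finset ι) {f : ι → ℝ} (hf : ∀ i ∈ s, 0 ≤ f i)
    {p : ℝ} (hp : 0 < p) (hp1 : p ≤ 1) : (∑ i ∈ s, f i) ^ p ≤ ∑ i ∈ s, f i ^ p :=
  le_sum_of_subadditive_on_pred (· ^ p) (0 ≤ ·) (Real.zero_rpow hp.ne').le
    (fun _ _ hx hy => Real.rpow_add_le_add_rpow hx hy hp.le hp1) (fun _ _ => add_nonneg) f hf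

theorem sum_rpow_inv_mul_le {ι : Type*} (s : Finset ι) {f g : ι → ℝ} (hf : ∀ i ∈ s, 0 ≤ f i)
    (hg : ∀ i ∈ s, 0 ≤ g i) {p : ℝ} (hp : 1 < p) :
    ∑ i ∈ s, f i ^ p⁻¹ * g i ≤
      (∑ i ∈ s, f i) ^ p⁻¹ * (∑ i ∈ s, g i ^ (p / (p - 1))) ^ ((p - 1) / p) := by
  have H := Real.inner_le_Lp_mul_Lq_of_nonneg s (.conjExponent hp)
    (fun i hi => Real.rpow_nonneg (hf i hi) p⁻¹) hg
  rwa [sum_congr rfl fun i hi => Real.rpow_inv_rpow (hf i hi) (by linarith), Real.conjExponent,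
    one_div_div, one_div] at H

theorem rpow_prod_lt_of_forall_lt {a : ℝ} (ha : 0 < a) {k : ℕ} (hk : 2 ≤ k) {f : ℕ → ℝ}
    (hf0 : ∀ t < k, 0 ≤ f t) (hf : ∀ t < k, f t < a ^ (((k : ℝ) - 1) / k)) :
    (∏ t ∈ range k, f t) ^ ((k : ℝ) - 1)⁻¹ < a := by
  have hk' : (1 : ℝ) < k := by exact_mod_cast hk
  have hexp : (0 : ℝ) < ((k : ℝ) - 1)⁻¹ := inv_pos.2 (by linarith)
  by_cases hzero : ∃ t < k, f t = 0
  · obtain ⟨t, ht, hft⟩ := hzero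
    rw [prod_eq_zero (mem_range.2 ht) hft, Real.zero_rpow hexp.ne']
    exact ha
  have hpos : ∀ t < k, 0 < f t := fun t ht =>
    (hf0 t ht).lt_of_ne fun h0 => hzero ⟨t, ht, h0.symm⟩
  calc (∏ t ∈ range k, f t) ^ ((k : ℝ) - 1)⁻¹
      < (∏ _t ∈ range k, a ^ (((k : ℝ) - 1) / k)) ^ ((k : ℝ) - 1)⁻¹ :=
        Real.rpow_lt_rpow (prod_nonneg fun t ht => hf0 t (mem_range.1 ht))
          (prod_lt_prod_of_nonempty (fun t ht => hpos t (mem_range.1 ht))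
            (fun t ht => hf t (mem_range.1 ht)) (nonempty_range_iff.2 (by omega))) hexp
    _ = a := by
        rw [prod_const, card_range, ← Real.rpow_natCast, ← Real.rpow_mul ha.le,
          ← Real.rpow_mul ha.le]
        convert Real.rpow_one a using 2
        field_simp
        exact div_self (by linarith)

structure IsLeveledTree {V : Type*} (parent : V → V) (root : V) (depth : V → ℕ) (h : ℕ) :
    Prop where
  parent_root : parent root = root
  depth_root : depth root = 0
  depth_eq_depth_parent_add_one : ∀ v, v ≠ root → depth v = depth (parent v) + 1
  isTreeLeaf_iff : ∀ v, IsTreeLeaf parent root v ↔ depth v = h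

def ancestorAt {V : Type*} (parent : V → V) (depth : V → ℕ) (d : ℕ) (v : V) : V :=
  parent^[depth v - d] v

def level {V : Type*} [Fintype V] (depth : V → ℕ) (d : ℕ) : Finset V :=
  univ.filter (depth · = d)

-- The leaf sum of `T^(i)`: its leaves are the leaves below `c p` for `p` of depth `i - 1`.
noncomputable def prunedLeafSum {V : Type*} [Fintype V] (parent : V → V) (root : V)
    (depth : V → ℕ) (w : V → ℝ) (e : ℝ) (c : V → V) (i : ℕ) : ℝ :=
  ∑ p ∈ level depth (i - 1), leafSum parent root w e (c p)

section

variable {V : Type*} {parent : V → V} {root : V} {depth : V → ℕ} {h : ℕ}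

theorem anc_trans_s6 {a b v : V} (hab : anc parent a b) (hbv : anc parent b v) : anc parent a v := by
  obtain ⟨n, rfl⟩ := hab
  obtain ⟨m, rfl⟩ := hbv
  exact ⟨n + m, Function.iterate_add_apply parent n m v⟩

theorem anc_parent (v : V) : anc parent (parent v) v := ⟨1, rfl⟩

theorem ancestorAt_anc (d : ℕ) (v : V) : anc parent (ancestorAt parent depth d v) v :=
  ⟨_, rfl⟩

@[simp]
theorem mem_level [Fintype V] {d : ℕ} {v : V} : v ∈ level depth d ↔ depth v = d := by
  simp [level]

theorem leafSum_nonneg [Fintype V] {w : V → ℝ} {e : ℝ} (hw : ∀ v, 0 ≤ w v) (v : V) :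
    0 ≤ leafSum parent root w e v :=
  sum_nonneg fun ℓ _ => Real.rpow_nonneg (hw ℓ) e

theorem leafSum_le_leafSum_of_anc [Fintype V] {w : V → ℝ} {e : ℝ} (hw : ∀ v, 0 ≤ w v)
    {a b : V} (hab : anc parent a b) :
    leafSum parent root w e b ≤ leafSum parent root w e a :=
  sum_le_sum_of_subset_of_nonneg (fun ℓ hℓ => by
      rw [mem_filter] at hℓ ⊢
      exact ⟨hℓ.1, hℓ.2.1, anc_trans_s6 hab hℓ.2.2⟩)
    fun ℓ _ _ => Real.rpow_nonneg (hw ℓ) e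

theorem prunedLeafSum_nonneg [Fintype V] {w : V → ℝ} {e : ℝ} (hw : ∀ v, 0 ≤ w v)
    (c : V → V) (i : ℕ) : 0 ≤ prunedLeafSum parent root depth w e c i :=
  sum_nonneg fun _ _ => leafSum_nonneg hw _

namespace IsLeveledTree

theorem eq_root_of_depth_eq_zero (T : IsLeveledTree parent root depth h) {v : V}
    (hv : depth v = 0) : v = root := by
  by_contra hne
  have := T.depth_eq_depth_parent_add_one v hne
  omega

theorem depth_iterate (T : IsLeveledTree parent root depth h) :
    ∀ {n : ℕ} {v : V}, n ≤ depth v → depth (parent^[n] v) = depth v - n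
  | 0, _, _ => rfl
  | n + 1, v, hn => by
    have hv : v ≠ root := by rintro rfl; rw [T.depth_root] at hn; omega
    have hpv := T.depth_eq_depth_parent_add_one v hv
    rw [Function.iterate_succ_apply, T.depth_iterate (by omega)]
    omega

theorem iterate_eq_root (T : IsLeveledTree parent root depth h) {n : ℕ} {v : V}
    (hn : depth v ≤ n) : parent^[n] v = root := by
  have hroot : parent^[depth v] v = root :=
    T.eq_root_of_depth_eq_zero (by rw [T.depth_iterate le_rfl, Nat.sub_self])
  rw [← Nat.sub_add_cancel hn, Function.iterate_add_apply, hroot,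
    Function.iterate_fixed T.parent_root]

theorem depth_ancestorAt (T : IsLeveledTree parent root depth h) {d : ℕ} {v : V}
    (hd : d ≤ depth v) : depth (ancestorAt parent depth d v) = d := by
  rw [ancestorAt, T.depth_iterate (Nat.sub_le _ _)]
  omega

theorem depth_le_of_anc (T : IsLeveledTree parent root depth h) {a v : V}
    (ha : anc parent a v) : depth a ≤ depth v := by
  obtain ⟨n, rfl⟩ := ha
  rcases le_or_gt n (depth v) with hn | hn
  · rw [T.depth_iterate hn]
    omega
  · rw [T.iterate_eq_root hn.le, T.depth_root]
    omega

theorem anc_iff (T : IsLeveledTree parent root depth h) {a v : V} :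
    anc parent a v ↔ ancestorAt parent depth (depth a) v = a := by
  refine ⟨fun ⟨n, hn⟩ => ?_, fun ha => ha ▸ ancestorAt_anc _ v⟩
  subst hn
  rcases le_or_gt n (depth v) with hn | hn
  · rw [ancestorAt, T.depth_iterate hn, Nat.sub_sub_self hn]
  · rw [T.iterate_eq_root hn.le, T.depth_root]
    exact T.iterate_eq_root (by omega)

theorem anc_root (T : IsLeveledTree parent root depth h) (v : V) : anc parent root v :=
  ⟨depth v, T.iterate_eq_root le_rfl⟩

theorem anc_of_anc_of_anc (T : IsLeveledTree parent root depth h) {a b v : V}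
    (ha : anc parent a v) (hb : anc parent b v) (hab : depth a ≤ depth b) : anc parent a b := by
  have hbv := T.depth_le_of_anc hb
  refine ⟨depth b - depth a, ?_⟩
  calc parent^[depth b - depth a] b
      = parent^[depth b - depth a] (parent^[depth v - depth b] v) :=
        congrArg _ (T.anc_iff.1 hb).symm
    _ = parent^[depth v - depth a] v := by
        rw [← Function.iterate_add_apply]
        congr 1
        omega
    _ = a := T.anc_iff.1 ha

theorem mem_childrenOf_iff (T : IsLeveledTree parent root depth h) {u v : V} :
    v ∈ childrenOf parent root u ↔ depth v = depth u + 1 ∧ anc parent u v := by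
  constructor
  · rintro ⟨rfl, hv⟩
    exact ⟨T.depth_eq_depth_parent_add_one v hv, anc_parent v⟩
  · rintro ⟨hd, hu⟩
    have hv : v ≠ root := by rintro rfl; rw [T.depth_root] at hd; omega
    refine ⟨?_, hv⟩
    have := T.anc_iff.1 hu
    rwa [ancestorAt, hd, Nat.add_sub_cancel_left, Function.iterate_one] at this

theorem designated_on_path_iff (T : IsLeveledTree parent root depth h) {c : V → V} {p ℓ : V}
    (hpℓ : anc parent p ℓ) (hlt : depth p < depth ℓ) (hc : c p ∈ childrenOf parent root p) :
    (∀ a, anc parent a ℓ → depth a = depth p + 1 → c (parent a) = a) ↔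
      anc parent (c p) ℓ := by
  have hq := T.depth_ancestorAt (d := depth p + 1) (v := ℓ) hlt
  have hqℓ : anc parent (ancestorAt parent depth (depth p + 1) ℓ) ℓ := ancestorAt_anc _ ℓ
  have hqp : parent (ancestorAt parent depth (depth p + 1) ℓ) = p :=
    (T.mem_childrenOf_iff.2 ⟨hq, T.anc_of_anc_of_anc hpℓ hqℓ (by omega)⟩).1
  have hunique : ∀ a, anc parent a ℓ → depth a = depth p + 1 →
      a = ancestorAt parent depth (depth p + 1) ℓ := fun a ha hda => by
    rw [← hda]
    exact (T.anc_iff.1 ha).symm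
  constructor
  · intro hpath
    have hcq := hpath _ hqℓ hq
    rw [hqp] at hcq
    rw [hcq]
    exact hqℓ
  · intro hcp a ha hda
    rw [hunique a ha hda, hqp, hunique _ hcp (T.mem_childrenOf_iff.1 hc).1]

variable [Fintype V]

theorem level_zero (T : IsLeveledTree parent root depth h) : level depth 0 = {root} := by
  ext v
  rw [mem_level, mem_singleton]
  exact ⟨T.eq_root_of_depth_eq_zero, fun hv => hv ▸ T.depth_root⟩

theorem filter_level_anc_eq_childrenOf (T : IsLeveledTree parent root depth h) (u : V) :
    (level depth (depth u + 1)).filter (anc parent u ·) =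
      univ.filter (· ∈ childrenOf parent root u) := by
  ext v
  simp [T.mem_childrenOf_iff]

theorem sum_level_filter_anc_fiberwise (T : IsLeveledTree parent root depth h)
    {M : Type*} [AddCommMonoid M] {p₀ : V} {d D : ℕ} (hd : depth p₀ ≤ d) (hdD : d ≤ D)
    (f : V → M) :
    ∑ p ∈ (level depth d).filter (anc parent p₀ ·),
        ∑ u ∈ (level depth D).filter (anc parent p ·), f u =
      ∑ u ∈ (level depth D).filter (anc parent p₀ ·), f u := by
  have hmaps : ∀ u ∈ (level depth D).filter (anc parent p₀ ·),
      ancestorAt parent depth d u ∈ (level depth d).filter (anc parent p₀ ·) := by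
    intro u hu
    rw [mem_filter, mem_level] at hu ⊢
    have hdu := T.depth_ancestorAt (hdD.trans hu.1.ge)
    exact ⟨hdu, T.anc_of_anc_of_anc hu.2 (ancestorAt_anc d u) (by rw [hdu]; exact hd)⟩
  rw [← sum_fiberwise_of_maps_to hmaps]
  refine sum_congr rfl fun p hp => ?_
  rw [mem_filter, mem_level] at hp
  rw [filter_filter]
  refine sum_congr (filter_congr fun u _ => ⟨fun hpu => ⟨anc_trans_s6 hp.2 hpu, ?_⟩, ?_⟩)
    fun _ _ => rfl
  · rw [← hp.1]
    exact T.anc_iff.1 hpu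
  · rintro ⟨-, rfl⟩
    exact ancestorAt_anc d u

theorem sum_level_fiberwise (T : IsLeveledTree parent root depth h) {M : Type*}
    [AddCommMonoid M] {d D : ℕ} (hdD : d ≤ D) (f : V → M) :
    ∑ p ∈ level depth d, ∑ u ∈ (level depth D).filter (anc parent p ·), f u =
      ∑ u ∈ level depth D, f u := by
  simpa only [filter_true_of_mem fun v _ => T.anc_root v] using
    T.sum_level_filter_anc_fiberwise (p₀ := root) (T.depth_root ▸ Nat.zero_le d) hdD f

variable {w : V → ℝ} {e : ℝ}

theorem leafSum_eq_sum_level_height (T : IsLeveledTree parent root depth h) (p : V) :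
    leafSum parent root w e p =
      ∑ ℓ ∈ (level depth h).filter (anc parent p ·), w ℓ ^ e := by
  rw [leafSum, level, filter_filter]
  exact sum_congr (filter_congr fun ℓ _ => by rw [T.isTreeLeaf_iff]) fun _ _ => rfl

theorem leafSum_eq_sum_level (T : IsLeveledTree parent root depth h) {p : V} {D : ℕ}
    (hpD : depth p ≤ D) (hD : D ≤ h) :
    leafSum parent root w e p =
      ∑ u ∈ (level depth D).filter (anc parent p ·), leafSum parent root w e u := by
  simp only [T.leafSum_eq_sum_level_height]
  exact (T.sum_level_filter_anc_fiberwise hpD hD _).symm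

theorem leafSum_eq_sum_childrenOf (T : IsLeveledTree parent root depth h) {u : V}
    (hu : depth u < h) :
    leafSum parent root w e u =
      ∑ v ∈ univ.filter (· ∈ childrenOf parent root u), leafSum parent root w e v := by
  rw [← T.filter_level_anc_eq_childrenOf, ← T.leafSum_eq_sum_level (Nat.le_succ _) hu]

theorem sum_level_mul_leafSum (T : IsLeveledTree parent root depth h) {d D : ℕ} (hdD : d ≤ D)
    (hD : D ≤ h) (F : V → ℝ) :
    ∑ u ∈ level depth D, F (ancestorAt parent depth d u) * leafSum parent root w e u =
      ∑ p ∈ level depth d, F p * leafSum parent root w e p := by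
  rw [← T.sum_level_fiberwise hdD]
  refine sum_congr rfl fun p hp => ?_
  rw [T.leafSum_eq_sum_level ((mem_level.1 hp).trans_le hdD) hD, mul_sum]
  refine sum_congr rfl fun u hu => ?_
  rw [← mem_level.1 hp, T.anc_iff.1 (mem_filter.1 hu).2]


theorem le_sum_level (T : IsLeveledTree parent root depth h)
    (hsub : ∀ u, ¬ IsTreeLeaf parent root u →
      w u ≤ ∑ v ∈ univ.filter (· ∈ childrenOf parent root u), w v) :
    ∀ {d : ℕ}, d ≤ h → w root ≤ ∑ u ∈ level depth d, w u
  | 0, _ => by rw [T.level_zero, sum_singleton]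
  | d + 1, hd => calc
      w root ≤ ∑ p ∈ level depth d, w p := T.le_sum_level hsub (by omega)
      _ ≤ ∑ p ∈ level depth d,
            ∑ u ∈ (level depth (d + 1)).filter (anc parent p ·), w u :=
        sum_le_sum fun p hp => by
          have hpd := mem_level.1 hp
          rw [← hpd, T.filter_level_anc_eq_childrenOf]
          exact hsub p (by rw [T.isTreeLeaf_iff]; omega)
      _ = ∑ u ∈ level depth (d + 1), w u := T.sum_level_fiberwise (Nat.le_succ d) w

theorem rpow_le_leafSum (T : IsLeveledTree parent root depth h) (hw : ∀ v, 0 ≤ w v)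
    (hsub : ∀ u, ¬ IsTreeLeaf parent root u →
      w u ≤ ∑ v ∈ univ.filter (· ∈ childrenOf parent root u), w v)
    (he0 : 0 < e) (he1 : e ≤ 1) {v : V} (hv : depth v ≤ h) :
    w v ^ e ≤ leafSum parent root w e v := by
  obtain ⟨n, hn⟩ := Nat.exists_eq_add_of_le hv
  induction n generalizing v with
  | zero =>
    exact single_le_sum (fun ℓ _ => Real.rpow_nonneg (hw ℓ) e)
      (mem_filter.2 ⟨mem_univ v, (T.isTreeLeaf_iff v).2 (by omega), ⟨0, rfl⟩⟩)
  | succ n ih =>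
    calc w v ^ e ≤ (∑ x ∈ univ.filter (· ∈ childrenOf parent root v), w x) ^ e :=
          Real.rpow_le_rpow (hw v) (hsub v (by rw [T.isTreeLeaf_iff]; omega)) he0.le
      _ ≤ ∑ x ∈ univ.filter (· ∈ childrenOf parent root v), w x ^ e :=
          rpow_sum_le_sum_rpow _ (fun x _ => hw x) he0 he1
      _ ≤ ∑ x ∈ univ.filter (· ∈ childrenOf parent root v), leafSum parent root w e x :=
          sum_le_sum fun x hx => by
            have hx := (T.mem_childrenOf_iff.1 (mem_filter.1 hx).2).1
            exact ih (by omega) (by omega)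
      _ = leafSum parent root w e v := (T.leafSum_eq_sum_childrenOf (by omega)).symm

theorem le_rpow_mul_leafSum (T : IsLeveledTree parent root depth h) (hw : ∀ v, 0 ≤ w v)
    (hsub : ∀ u, ¬ IsTreeLeaf parent root u →
      w u ≤ ∑ v ∈ univ.filter (· ∈ childrenOf parent root u), w v)
    {κ : ℝ} (hκ : 1 < κ) {u : V} (hu : depth u < h) {M : ℝ}
    (hM : ∀ v ∈ childrenOf parent root u, leafSum parent root w ((κ - 1) / κ) v ≤ M) :
    w u ≤ M ^ (κ - 1)⁻¹ * leafSum parent root w ((κ - 1) / κ) u := by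
  set e := (κ - 1) / κ with he
  have he0 : 0 < e := div_pos (by linarith) (by linarith)
  have he1 : e ≤ 1 := (div_le_one (by linarith)).2 (by linarith)
  have hexp : e * (κ - 1)⁻¹ + e = 1 := by
    have : κ - 1 ≠ 0 := by linarith
    rw [he]
    field_simp
    ring
  have hsplit : ∀ x, w x = (w x ^ e) ^ (κ - 1)⁻¹ * w x ^ e := fun x => by
    rw [← Real.rpow_mul (hw x), ← Real.rpow_add' (hw x) (by rw [hexp]; exact one_ne_zero), hexp,
      Real.rpow_one]
  calc w u ≤ ∑ x ∈ univ.filter (· ∈ childrenOf parent root u), w x :=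
        hsub u (by rw [T.isTreeLeaf_iff]; omega)
    _ ≤ ∑ x ∈ univ.filter (· ∈ childrenOf parent root u),
          M ^ (κ - 1)⁻¹ * leafSum parent root w e x :=
        sum_le_sum fun x hx => by
          have hx := (mem_filter.1 hx).2
          have hle : w x ^ e ≤ leafSum parent root w e x :=
            T.rpow_le_leafSum hw hsub he0 he1 (by have := (T.mem_childrenOf_iff.1 hx).1; omega)
          have hpow := Real.rpow_le_rpow (Real.rpow_nonneg (hw x) e) (hle.trans (hM x hx))
            (inv_nonneg.2 (by linarith : (0 : ℝ) ≤ κ - 1))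
          rw [hsplit x]
          exact mul_le_mul hpow hle (Real.rpow_nonneg (hw x) e)
            ((Real.rpow_nonneg (Real.rpow_nonneg (hw x) e) _).trans hpow)
    _ = M ^ (κ - 1)⁻¹ * leafSum parent root w e u := by
        rw [← mul_sum, ← T.leafSum_eq_sum_childrenOf hu]

theorem leafSum_le_of_forall_childrenOf (T : IsLeveledTree parent root depth h)
    (hw : ∀ v, 0 ≤ w v) {p u : V} (hpu : anc parent p u) (hlt : depth p < depth u) {M : ℝ}
    (hM : ∀ v ∈ childrenOf parent root p, leafSum parent root w e v ≤ M) :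
    leafSum parent root w e u ≤ M := by
  have hv := T.depth_ancestorAt (d := depth p + 1) (v := u) hlt
  have hvu : anc parent (ancestorAt parent depth (depth p + 1) u) u := ancestorAt_anc _ u
  refine (leafSum_le_leafSum_of_anc hw hvu).trans (hM _ ?_)
  exact T.mem_childrenOf_iff.2 ⟨hv, T.anc_of_anc_of_anc hpu hvu (by rw [hv]; omega)⟩

variable {c : V → V}

theorem leafSum_le_prunedLeafSum (T : IsLeveledTree parent root depth h) (hw : ∀ v, 0 ≤ w v)
    (hmax : ∀ p, depth p < h → ∀ v ∈ childrenOf parent root p,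
      leafSum parent root w e v ≤ leafSum parent root w e (c p))
    {i : ℕ} {u : V} (hi : 1 ≤ i) (hiu : i ≤ depth u) (hih : i ≤ h) :
    leafSum parent root w e u ≤ prunedLeafSum parent root depth w e c i := by
  have hp := T.depth_ancestorAt (d := i - 1) (v := u) (by omega)
  calc leafSum parent root w e u
      ≤ leafSum parent root w e (c (ancestorAt parent depth (i - 1) u)) :=
        T.leafSum_le_of_forall_childrenOf hw (ancestorAt_anc _ u) (by omega) (hmax _ (by omega))
    _ ≤ prunedLeafSum parent root depth w e c i :=
        single_le_sum (fun _ _ => leafSum_nonneg hw _) (mem_level.2 hp)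

theorem sum_prunedLeaves_eq (T : IsLeveledTree parent root depth h)
    (hc : ∀ p, depth p < h → c p ∈ childrenOf parent root p) {i : ℕ} (hi : 1 ≤ i)
    (hih : i ≤ h) :
    ∑ ℓ ∈ univ.filter (fun ℓ => IsTreeLeaf parent root ℓ ∧
        ∀ a : V, anc parent a ℓ → depth a = i → c (parent a) = a), w ℓ ^ e =
      prunedLeafSum parent root depth w e c i := by
  have hS : univ.filter (fun ℓ => IsTreeLeaf parent root ℓ ∧
        ∀ a : V, anc parent a ℓ → depth a = i → c (parent a) = a) =
      (level depth h).filter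
        (fun ℓ => anc parent (c (ancestorAt parent depth (i - 1) ℓ)) ℓ) := by
    ext ℓ
    simp only [mem_filter, mem_univ, true_and, mem_level, T.isTreeLeaf_iff]
    refine and_congr_right fun hℓ => ?_
    have hpd := T.depth_ancestorAt (d := i - 1) (v := ℓ) (by omega)
    have := T.designated_on_path_iff (ancestorAt_anc (depth := depth) (i - 1) ℓ) (by omega)
      (hc _ (by omega))
    rwa [hpd, Nat.sub_add_cancel hi] at this
  have hmaps : ∀ ℓ ∈ (level depth h).filter
      (fun ℓ => anc parent (c (ancestorAt parent depth (i - 1) ℓ)) ℓ),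
      ancestorAt parent depth (i - 1) ℓ ∈ level depth (i - 1) := fun ℓ hℓ =>
    mem_level.2 (T.depth_ancestorAt (by have := mem_level.1 (mem_filter.1 hℓ).1; omega))
  rw [hS, ← sum_fiberwise_of_maps_to hmaps, prunedLeafSum]
  refine sum_congr rfl fun p hp => ?_
  have hpd := mem_level.1 hp
  rw [T.leafSum_eq_sum_level_height, filter_filter]
  refine sum_congr (filter_congr fun ℓ _ => ⟨?_, ?_⟩) fun _ _ => rfl
  · rintro ⟨hanc, rfl⟩
    exact hanc
  · intro hanc
    have hA : ancestorAt parent depth (i - 1) ℓ = p := by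
      rw [← hpd]
      exact T.anc_iff.1 (anc_trans_s6 ⟨1, (hc p (by omega)).1⟩ hanc)
    rw [hA]
    exact ⟨hanc, rfl⟩

theorem sum_rpow_inv_mul_leafSum_le_mul_rpow (T : IsLeveledTree parent root depth h)
    (hw : ∀ v, 0 ≤ w v)
    (hmax : ∀ p, depth p < h → ∀ v ∈ childrenOf parent root p,
      leafSum parent root w e v ≤ leafSum parent root w e (c p))
    {d D : ℕ} (hdD : d < D) (hD : D ≤ h) {p : ℝ} (hp : 1 < p) {X : ℝ} (hX : 0 ≤ X)
    (hprev : ∑ q ∈ level depth d, leafSum parent root w e (c q) ^ (p - 1)⁻¹ *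
      leafSum parent root w e q ≤ X ^ (p - 1)⁻¹) :
    ∑ u ∈ level depth D, leafSum parent root w e (c u) ^ p⁻¹ * leafSum parent root w e u ≤
      ((∑ u ∈ level depth D, leafSum parent root w e (c u)) * X) ^ p⁻¹ := by
  set g := leafSum parent root w e
  have hg : ∀ v, 0 ≤ g v := leafSum_nonneg hw
  have hr : 0 < p - 1 := by linarith
  have hpow : ∀ u ∈ level depth D,
      g u ^ (p / (p - 1)) ≤ g (c (ancestorAt parent depth d u)) ^ (p - 1)⁻¹ * g u := by
    intro u hu
    have hud := mem_level.1 hu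
    have hchain : g u ≤ g (c (ancestorAt parent depth d u)) :=
      T.leafSum_le_of_forall_childrenOf hw (ancestorAt_anc d u)
        (by rw [T.depth_ancestorAt (by omega)]; omega)
        (hmax _ (by rw [T.depth_ancestorAt (by omega)]; omega))
    rw [show p / (p - 1) = (p - 1)⁻¹ + 1 by field_simp; ring,
      Real.rpow_add_one' (hg u) (by positivity)]
    exact mul_le_mul_of_nonneg_right (Real.rpow_le_rpow (hg u) hchain (by positivity)) (hg u)
  have hsum : ∑ u ∈ level depth D, g u ^ (p / (p - 1)) ≤ X ^ (p - 1)⁻¹ := calc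
    _ ≤ ∑ u ∈ level depth D, g (c (ancestorAt parent depth d u)) ^ (p - 1)⁻¹ * g u :=
        sum_le_sum hpow
    _ = ∑ q ∈ level depth d, g (c q) ^ (p - 1)⁻¹ * g q :=
        T.sum_level_mul_leafSum hdD.le hD fun q => g (c q) ^ (p - 1)⁻¹
    _ ≤ X ^ (p - 1)⁻¹ := hprev
  have hWnn : 0 ≤ ∑ u ∈ level depth D, g (c u) := sum_nonneg fun u _ => hg _
  calc ∑ u ∈ level depth D, g (c u) ^ p⁻¹ * g u
      ≤ (∑ u ∈ level depth D, g (c u)) ^ p⁻¹ *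
          (∑ u ∈ level depth D, g u ^ (p / (p - 1))) ^ ((p - 1) / p) :=
        sum_rpow_inv_mul_le _ (fun u _ => hg _) (fun u _ => hg u) hp
    _ ≤ (∑ u ∈ level depth D, g (c u)) ^ p⁻¹ * (X ^ (p - 1)⁻¹) ^ ((p - 1) / p) :=
        mul_le_mul_of_nonneg_left
          (Real.rpow_le_rpow (sum_nonneg fun u _ => Real.rpow_nonneg (hg u) _) hsum
            (div_nonneg hr.le (by linarith)))
          (Real.rpow_nonneg hWnn _)
    _ = ((∑ u ∈ level depth D, g (c u)) * X) ^ p⁻¹ := by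
        rw [← Real.rpow_mul hX, Real.mul_rpow hWnn hX]
        congr 2
        field_simp

theorem sum_rpow_inv_mul_leafSum_le_prod (T : IsLeveledTree parent root depth h)
    (hw : ∀ v, 0 ≤ w v)
    (hmax : ∀ p, depth p < h → ∀ v ∈ childrenOf parent root p,
      leafSum parent root w e v ≤ leafSum parent root w e (c p))
    (i : ℕ → ℕ) {m : ℕ} (hm : 1 ≤ m) (hi : ∀ t ≤ m, 1 ≤ i t ∧ i t ≤ h)
    (hmono : ∀ t < m, i t < i (t + 1)) :
    ∑ u ∈ level depth (i m - 1),
        leafSum parent root w e (c u) ^ (m : ℝ)⁻¹ * leafSum parent root w e u ≤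
      (∏ t ∈ range (m + 1), prunedLeafSum parent root depth w e c (i t)) ^ (m : ℝ)⁻¹ := by
  induction m, hm using Nat.le_induction with
  | base =>
    have h0 := hi 0 (by omega)
    have h1 := hi 1 le_rfl
    have h01 : i 0 < i 1 := hmono 0 one_pos
    simp only [Nat.cast_one, inv_one, Real.rpow_one]
    rw [prod_range_succ, prod_range_one, mul_comm, prunedLeafSum, sum_mul]
    exact sum_le_sum fun u hu => mul_le_mul_of_nonneg_left
      (T.leafSum_le_prunedLeafSum hw hmax h0.1 (by rw [mem_level.1 hu]; omega) h0.2)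
      (leafSum_nonneg hw _)
  | succ n hn ih =>
    have hn0 := hi n (by omega)
    have hn1 := hi (n + 1) le_rfl
    have hnn := hmono n (by omega)
    have hstep := T.sum_rpow_inv_mul_leafSum_le_mul_rpow hw hmax (d := i n - 1)
      (D := i (n + 1) - 1) (by omega) (by omega) (p := (n : ℝ) + 1)
      (by have : (1 : ℝ) ≤ n := by exact_mod_cast hn
          linarith)
      (prod_nonneg fun t _ => prunedLeafSum_nonneg hw c (i t))
      (by simpa only [add_sub_cancel_right] using
        ih (fun t ht => hi t (by omega)) fun t ht => hmono t (by omega))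
    rw [prod_range_succ, mul_comm]
    push_cast
    exact hstep

theorem le_rpow_prod_prunedLeafSum (T : IsLeveledTree parent root depth h) (hw : ∀ v, 0 ≤ w v)
    (hsub : ∀ u, ¬ IsTreeLeaf parent root u →
      w u ≤ ∑ v ∈ univ.filter (· ∈ childrenOf parent root u), w v)
    {k : ℕ} (hk : 2 ≤ k)
    (hmax : ∀ p, depth p < h → ∀ v ∈ childrenOf parent root p,
      leafSum parent root w (((k : ℝ) - 1) / k) v ≤
        leafSum parent root w (((k : ℝ) - 1) / k) (c p))
    (i : ℕ → ℕ) (hi : ∀ t < k, 1 ≤ i t ∧ i t ≤ h)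
    (hmono : ∀ t, t + 1 < k → i t < i (t + 1)) :
    w root ≤
      (∏ t ∈ range k, prunedLeafSum parent root depth w (((k : ℝ) - 1) / k) c (i t)) ^
        ((k : ℝ) - 1)⁻¹ := by
  have hcast : ((k - 1 : ℕ) : ℝ) = k - 1 := by rw [Nat.cast_sub (by omega), Nat.cast_one]
  have hchain := T.sum_rpow_inv_mul_leafSum_le_prod hw hmax i (m := k - 1) (by omega)
    (fun t ht => hi t (by omega)) fun t ht => hmono t (by omega)
  rw [Nat.sub_add_cancel (by omega : 1 ≤ k), hcast] at hchain
  have hD := hi (k - 1) (by omega)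
  refine (T.le_sum_level hsub (by omega)).trans ((sum_le_sum fun u hu => ?_).trans hchain)
  have hud := mem_level.1 hu
  exact T.le_rpow_mul_leafSum hw hsub (Nat.one_lt_cast.2 hk) (by omega) (hmax u (by omega))

theorem card_filter_le_prunedLeafSum (T : IsLeveledTree parent root depth h)
    (hw : ∀ v, 0 < w v)
    (hsub : ∀ u, ¬ IsTreeLeaf parent root u →
      w u ≤ ∑ v ∈ univ.filter (· ∈ childrenOf parent root u), w v)
    {k : ℕ} (hk : 2 ≤ k) (hkh : k ≤ h)
    (hmax : ∀ p, depth p < h → ∀ v ∈ childrenOf parent root p,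
      leafSum parent root w (((k : ℝ) - 1) / k) v ≤
        leafSum parent root w (((k : ℝ) - 1) / k) (c p)) :
    h - k + 1 ≤ #((Icc 1 h).filter fun i =>
      w root ^ (((k : ℝ) - 1) / k) ≤
        prunedLeafSum parent root depth w (((k : ℝ) - 1) / k) c i) := by
  set W := prunedLeafSum parent root depth w (((k : ℝ) - 1) / k) c
  have hsplit := card_filter_add_card_filter_not (s := Icc 1 h)
    fun i => w root ^ (((k : ℝ) - 1) / k) ≤ W i
  rw [Nat.card_Icc] at hsplit
  set bad := (Icc 1 h).filter fun i => ¬ w root ^ (((k : ℝ) - 1) / k) ≤ W i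
  suffices #bad < k by omega
  by_contra! hbad
  have hfin : (Set.ofPred (· ∈ bad)).Finite := bad.finite_toSet
  have hcard : #hfin.toFinset = #bad := by simp
  have hmem : ∀ t < k, Nat.nth (· ∈ bad) t ∈ bad := fun t ht =>
    Nat.nth_mem_of_lt_card hfin (by omega)
  refine (T.le_rpow_prod_prunedLeafSum (fun v => (hw v).le) hsub hk hmax (Nat.nth (· ∈ bad))
    (fun t ht => ?_) fun t ht => Nat.nth_lt_nth_of_lt_card hfin t.lt_succ_self (by omega)).not_gt
    (rpow_prod_lt_of_forall_lt (hw root) hk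
      (fun t _ => prunedLeafSum_nonneg (fun v => (hw v).le) c _) fun t ht => ?_)
  · exact mem_Icc.1 (mem_filter.1 (hmem t ht)).1
  · exact not_le.1 (mem_filter.1 (hmem t ht)).2

end IsLeveledTree

end

/-- **iterated Hölder argument.** Let `T` be a finite rooted tree all of whose
leaves are at depth `h ≥ k ≥ 2`, let `w` be subadditive, and let each non-leaf `u` have a
designated child `c(u)` maximizing `w_h^k(v) = ∑_{leaves ℓ below v} w(ℓ)^((k−1)/k)` among
children of `u`. For `i ∈ {1,…,h}` let `T^(i)` be obtained by deleting, below every vertex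
of depth `i−1`, the subtrees rooted at its non-designated children. Then there exists
`L ⊆ {1,…,h}` with `|L| ≥ h−k+1` such that for each `i ∈ L`,
`∑_{ℓ leaf of T^(i)} w(ℓ)^((k−1)/k) ≥ w(root)^((k−1)/k)`. -/
theorem stmt6 {V : Type*} [Fintype V] [DecidableEq V]
    (h k : ℕ) (hk : 2 ≤ k) (hkh : k ≤ h)
    (root : V) (parent : V → V) (depth : V → ℕ)
    (hparent_root : parent root = root)
    (hdepth_root : depth root = 0)
    (hdepth : ∀ v, v ≠ root → depth v = depth (parent v) + 1)
    (hleafdepth : ∀ v, IsTreeLeaf parent root v ↔ depth v = h)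
    (w : V → ℝ) (hw : ∀ v, 0 < w v)
    (hsub : ∀ u, ¬ IsTreeLeaf parent root u →
      w u ≤ ∑ v ∈ Finset.univ.filter (fun v => v ∈ childrenOf parent root u), w v)
    (c : V → V)
    (hc_child : ∀ u, ¬ IsTreeLeaf parent root u → c u ∈ childrenOf parent root u)
    (hc_max : ∀ u, ¬ IsTreeLeaf parent root u → ∀ v ∈ childrenOf parent root u,
      leafSum parent root w (((k : ℝ) - 1) / k) v ≤
        leafSum parent root w (((k : ℝ) - 1) / k) (c u)) :
    ∃ L : Finset ℕ, L ⊆ Finset.Icc 1 h ∧ h - k + 1 ≤ L.card ∧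
      ∀ i ∈ L,
        w root ^ (((k : ℝ) - 1) / k) ≤
          ∑ ℓ ∈ Finset.univ.filter (fun ℓ => IsTreeLeaf parent root ℓ ∧
              ∀ a : V, anc parent a ℓ → depth a = i → c (parent a) = a),
            w ℓ ^ (((k : ℝ) - 1) / k) := by
  have T : IsLeveledTree parent root depth h := ⟨hparent_root, hdepth_root, hdepth, hleafdepth⟩
  have hinner : ∀ p, depth p < h → ¬ IsTreeLeaf parent root p := fun p hp => by
    rw [hleafdepth]
    omega
  refine ⟨_, filter_subset _ _,
    T.card_filter_le_prunedLeafSum hw hsub hk hkh fun p hp => hc_max p (hinner p hp),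
    fun i hi => ?_⟩
  obtain ⟨hi, hle⟩ := mem_filter.1 hi
  -- `convert` reconciles the decidability instances of the two filters over the leaves.
  convert hle.trans_eq (T.sum_prunedLeaves_eq (fun p hp => hc_child p (hinner p hp))
    (mem_Icc.1 hi).1 (mem_Icc.1 hi).2).symm
end

section
/- Let (X,d) be a compact metric space, α, K > 0, and μ a Borel measure on X with μ(X) > 0 and μ(B(x,r)) ≤ K·r^α for all x ∈ X and r > 0. Let ε ∈ (0,1), c > 0, and suppose S ⊆ X is a closed subset such that every cover of S by closed balls {B(x_i, r_i)}_{i∈I} satisfies ∑_{i∈I} μ(B(x_i, c·r_i))^(1−ε) ≥ μ(X)^(1−ε). Then the Hausdorff dimension of S is at least (1−ε)·α. -/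
open MeasureTheory Metric
open scoped ENNReal

/-!
A cover of `S` by sets `tₙ` yields a cover by the closed balls of radius `diam tₙ` centred in
`tₙ`. Under the growth bound `μ(B(x,r)) ≤ K rᵅ`, each term `μ(B(xₙ, c·diam tₙ))^(1-ε)` of the
hypothesis is at most `K^(1-ε) c^((1-ε)α) (diam tₙ)^((1-ε)α)`, so every cover of `S` has
`∑ (diam tₙ)^((1-ε)α) ≥ μ(X)^(1-ε) / (K^(1-ε) c^((1-ε)α)) > 0`. Hence `S` has positive
`(1-ε)α`-dimensional Hausdorff measure.
-/

section HausdorffMeasure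

variable {X : Type*} [MetricSpace X] [MeasurableSpace X] [BorelSpace X]

theorem le_hausdorffMeasure_of_forall_closedBall_cover {S : Set X} {β : ℝ} (hβ : 0 < β)
    {L : ℝ≥0∞}
    (h : ∀ (I : Type) (x : I → X) (r : I → ℝ), (∀ i, 0 ≤ r i) →
      S ⊆ ⋃ i, closedBall (x i) (r i) → L ≤ ∑' i, ENNReal.ofReal (r i) ^ β) :
    L ≤ μH[β] S := by
  rw [Measure.hausdorffMeasure_apply]
  refine le_iSup₂_of_le 1 one_pos (le_iInf₂ fun t ht => le_iInf fun _ => ?_)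
  by_cases hunb : ∃ n, ediam (t n) = ⊤
  · obtain ⟨n, hn⟩ := hunb
    have hne : (t n).Nonempty := Set.nonempty_iff_ne_empty.2 fun he => by simp [he] at hn
    calc L ≤ ⊤ := le_top
      _ = ⨆ _ : (t n).Nonempty, ediam (t n) ^ β := by
        rw [iSup_pos hne, hn, ENNReal.top_rpow_of_pos hβ]
      _ ≤ _ := ENNReal.le_tsum n
  push Not at hunb
  let I := {n // (t n).Nonempty}
  have hcov : S ⊆ ⋃ i : I, closedBall i.2.some (diam (t i)) := by
    intro a ha
    obtain ⟨n, hn⟩ := Set.mem_iUnion.1 (ht ha)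
    exact Set.mem_iUnion.2
      ⟨⟨n, a, hn⟩, dist_le_diam_of_mem' (hunb n) hn (Set.Nonempty.some_mem _)⟩
  calc L ≤ ∑' i : I, ENNReal.ofReal (diam (t i)) ^ β := h I _ _ (fun _ => diam_nonneg) hcov
    _ = ∑' i : I, ⨆ _ : (t i).Nonempty, ediam (t i) ^ β := by
      refine tsum_congr fun i => ?_
      rw [iSup_pos i.2, diam, ENNReal.ofReal_toReal (hunb i)]
    _ ≤ ∑' n, ⨆ _ : (t n).Nonempty, ediam (t n) ^ β :=
      ENNReal.tsum_comp_le_tsum_of_injective Subtype.val_injective _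

end HausdorffMeasure

section BallGrowth

variable {X : Type*} [MetricSpace X] [MeasurableSpace X] {μ : Measure X} {α K : ℝ}

theorem measure_singleton_eq_zero_of_measure_closedBall_le (hα : 0 < α)
    (hμball : ∀ (x : X) (r : ℝ), 0 < r → μ (closedBall x r) ≤ ENNReal.ofReal (K * r ^ α))
    (x : X) : μ {x} = 0 := by
  have hlim : Filter.Tendsto (fun r : ℝ => ENNReal.ofReal (K * r ^ α))
      (nhdsWithin 0 (Set.Ioi 0)) (nhds 0) := by
    have hcont : ContinuousAt (fun r : ℝ => ENNReal.ofReal (K * r ^ α)) 0 :=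
      ENNReal.continuous_ofReal.continuousAt.comp
        ((Real.continuousAt_rpow_const 0 α (Or.inr hα.le)).const_mul K)
    simpa [Real.zero_rpow hα.ne'] using hcont.tendsto.mono_left nhdsWithin_le_nhds
  refine nonpos_iff_eq_zero.1 (ge_of_tendsto hlim ?_)
  filter_upwards [self_mem_nhdsWithin] with r hr
  exact (measure_mono (Set.singleton_subset_iff.2 (mem_closedBall_self (le_of_lt hr)))).trans
    (hμball x r hr)

theorem measure_closedBall_le_of_nonneg (hα : 0 < α)
    (hμball : ∀ (x : X) (r : ℝ), 0 < r → μ (closedBall x r) ≤ ENNReal.ofReal (K * r ^ α))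
    (x : X) {r : ℝ} (hr : 0 ≤ r) : μ (closedBall x r) ≤ ENNReal.ofReal (K * r ^ α) := by
  rcases hr.lt_or_eq with hr | rfl
  · exact hμball x r hr
  · simp [closedBall_zero, measure_singleton_eq_zero_of_measure_closedBall_le hα hμball x]

theorem rpow_measure_closedBall_mul_le (hα : 0 < α) (hK : 0 ≤ K)
    (hμball : ∀ (x : X) (r : ℝ), 0 < r → μ (closedBall x r) ≤ ENNReal.ofReal (K * r ^ α))
    (x : X) {c r p : ℝ} (hc : 0 ≤ c) (hr : 0 ≤ r) (hp : 0 ≤ p) :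
    μ (closedBall x (c * r)) ^ p ≤
      ENNReal.ofReal (K ^ p * c ^ (p * α)) * ENNReal.ofReal r ^ (p * α) := by
  have hcr : 0 ≤ c * r := mul_nonneg hc hr
  have hKp : 0 ≤ K ^ p * c ^ (p * α) := by positivity
  calc μ (closedBall x (c * r)) ^ p ≤ ENNReal.ofReal (K * (c * r) ^ α) ^ p :=
        ENNReal.rpow_le_rpow (measure_closedBall_le_of_nonneg hα hμball x hcr) hp
    _ = ENNReal.ofReal ((K * (c * r) ^ α) ^ p) :=
        ENNReal.ofReal_rpow_of_nonneg (by positivity) hp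
    _ = ENNReal.ofReal (K ^ p * c ^ (p * α) * r ^ (p * α)) := by
        rw [Real.mul_rpow hK (by positivity), Real.mul_rpow hc hr,
          Real.mul_rpow (by positivity) (by positivity), ← Real.rpow_mul hc, ← Real.rpow_mul hr,
          mul_comm α p, mul_assoc]
    _ = _ := by rw [ENNReal.ofReal_mul hKp, ENNReal.ofReal_rpow_of_nonneg hr (by positivity)]

end BallGrowth

theorem stmt9_general {X : Type*} [MetricSpace X]
    [MeasurableSpace X] [BorelSpace X]
    (μ : Measure X) (α K : ℝ) (hα : 0 < α) (hK : 0 < K)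
    (hμpos : 0 < μ Set.univ)
    (hμball : ∀ (x : X) (r : ℝ), 0 < r → μ (closedBall x r) ≤ ENNReal.ofReal (K * r ^ α))
    (ε c : ℝ) (hε : ε ∈ Set.Ioo (0 : ℝ) 1) (hc : 0 < c)
    (S : Set X)
    (hcover : ∀ (I : Type) (x : I → X) (r : I → ℝ), (∀ i, 0 ≤ r i) →
      S ⊆ ⋃ i, closedBall (x i) (r i) →
      (μ Set.univ) ^ (1 - ε) ≤ ∑' i, (μ (closedBall (x i) (c * r i))) ^ (1 - ε)) :
    ENNReal.ofReal ((1 - ε) * α) ≤ dimH S := by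
  have hp : 0 < 1 - ε := sub_pos.2 hε.2
  have hβ : 0 < (1 - ε) * α := mul_pos hp hα
  set C := ENNReal.ofReal (K ^ (1 - ε) * c ^ ((1 - ε) * α))
  have hC : C ≠ 0 := ENNReal.ofReal_ne_zero_iff.2 (by positivity)
  have hL : (μ Set.univ) ^ (1 - ε) / C ≠ 0 :=
    ENNReal.div_ne_zero.2 ⟨(ENNReal.rpow_pos_of_nonneg hμpos hp.le).ne', ENNReal.ofReal_ne_top⟩
  have hH : (μ Set.univ) ^ (1 - ε) / C ≤ μH[(1 - ε) * α] S := by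
    refine le_hausdorffMeasure_of_forall_closedBall_cover hβ fun I x r hr hS =>
      ENNReal.div_le_of_le_mul' ?_
    calc (μ Set.univ) ^ (1 - ε) ≤ ∑' i, (μ (closedBall (x i) (c * r i))) ^ (1 - ε) :=
          hcover I x r hr hS
      _ ≤ ∑' i, C * ENNReal.ofReal (r i) ^ ((1 - ε) * α) := ENNReal.tsum_le_tsum fun i =>
          rpow_measure_closedBall_mul_le hα hK.le hμball _ hc.le (hr i) hp.le
      _ = C * ∑' i, ENNReal.ofReal (r i) ^ ((1 - ε) * α) := ENNReal.tsum_mul_left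
  have hH0 : μH[((1 - ε) * α).toNNReal] S ≠ 0 := by
    rw [Real.coe_toNNReal _ hβ.le]
    exact (pos_iff_ne_zero.2 hL |>.trans_le hH).ne'
  exact le_dimH_of_hausdorffMeasure_ne_zero hH0

/-- Let `(X,d)` be a compact metric space, `α, K > 0`, and `μ` a Borel
measure with `μ(X) > 0` and `μ(B(x,r)) ≤ K·r^α`. If `ε ∈ (0,1)`, `c > 0`, and `S ⊆ X` is a
closed subset such that every cover of `S` by closed balls `{B(xᵢ,rᵢ)}` satisfies
`∑ᵢ μ(B(xᵢ, c·rᵢ))^(1−ε) ≥ μ(X)^(1−ε)`, then `dim_H S ≥ (1−ε)·α`. -/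
theorem stmt9 {X : Type*} [MetricSpace X] [CompactSpace X]
    [MeasurableSpace X] [BorelSpace X]
    (μ : Measure X) (α K : ℝ) (hα : 0 < α) (hK : 0 < K)
    (hμpos : 0 < μ Set.univ)
    (hμball : ∀ (x : X) (r : ℝ), 0 < r → μ (closedBall x r) ≤ ENNReal.ofReal (K * r ^ α))
    (ε c : ℝ) (hε : ε ∈ Set.Ioo (0 : ℝ) 1) (hc : 0 < c)
    (S : Set X) (hS : IsClosed S)
    (hcover : ∀ (I : Type) (x : I → X) (r : I → ℝ), (∀ i, 0 ≤ r i) →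
      S ⊆ ⋃ i, closedBall (x i) (r i) →
      (μ Set.univ) ^ (1 - ε) ≤ ∑' i, (μ (closedBall (x i) (c * r i))) ^ (1 - ε)) :
    ENNReal.ofReal ((1 - ε) * α) ≤ dimH S :=
  stmt9_general μ α K hα hK hμpos hμball ε c hε hc S hcover
end

section
/- Let (X,d) be a finite metric space with n = |X| ≥ 2 points, diameter 1, and minimal positive distance δ, and let Ψ > 1/δ (so that Ψ·δ > 1 = diam(X)). Consider Y = X^ℕ (sequences in X) with the metric ρ(x,y) = d(x_{k}, y_{k}) / n^{(k−1)/α} where k = k(x,y) is the first coordinate at which x and y differ and α = log n / log Ψ. Then (Y, ρ) is a compact metric space of Hausdorff dimension exactly log_Ψ n. -/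
/-!
Cylinders of length `m` (there are `n ^ m` of them) have diameter at most `Ψ ^ (-m)`, so covering
by them gives `μH[d] Y = 0` as soon as `n < Ψ ^ d`, i.e. `d > α`. Conversely, reading the
coordinates as base-`n` digits maps `Y` onto `[0, 1]`; points first differing at coordinate `m` are
at distance at least `δ Ψ ^ (-m)` while their images are within `n ^ (-m) = (Ψ ^ (-m)) ^ α`, so this
map is `α`-Hölder and `1 = dimH [0, 1] ≤ dimH Y / α`. The same diameter bound makes the inverse
`X^ℕ → Y` of the coordinate map continuous, so `Y` is compact.
-/

open scoped Classical

/-- The self-similar distance on `X^ℕ`: for `x ≠ y`, with `m` the first differing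
coordinate (the paper's `k = m+1`), `ρ(x,y) = d(x_m, y_m) / n^(m/α)`. -/
noncomputable def selfSimDist {X : Type*} [MetricSpace X] (n : ℕ) (α : ℝ)
    (x y : ℕ → X) : ℝ :=
  if h : x = y then 0
  else
    dist (x (Nat.find (Function.ne_iff.mp h))) (y (Nat.find (Function.ne_iff.mp h))) /
      (n : ℝ) ^ ((Nat.find (Function.ne_iff.mp h) : ℝ) / α)

open Set Filter Topology MeasureTheory
open scoped ENNReal NNReal

lemma exists_forall_lt_eq_and_ne {X : Type*} {u v : ℕ → X} (h : u ≠ v) :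
    ∃ m, (∀ k < m, u k = v k) ∧ u m ≠ v m :=
  have h' := Function.ne_iff.mp h
  ⟨Nat.find h', fun _ hk => not_not.mp (Nat.find_min h' hk), Nat.find_spec h'⟩

lemma HolderWith.of_dist_le {X Y : Type*} [PseudoMetricSpace X] [PseudoMetricSpace Y]
    {C r : ℝ≥0} {f : X → Y} (h : ∀ x y, dist (f x) (f y) ≤ C * dist x y ^ (r : ℝ)) :
    HolderWith C r f := by
  intro x y
  have h' : nndist (f x) (f y) ≤ C * nndist x y ^ (r : ℝ) := by
    rw [← NNReal.coe_le_coe]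
    simpa only [NNReal.coe_mul, NNReal.coe_rpow, coe_nndist] using h x y
  rw [edist_nndist, edist_nndist, ← ENNReal.coe_rpow_of_nonneg _ r.coe_nonneg, ← ENNReal.coe_mul]
  exact ENNReal.coe_le_coe.mpr h'

lemma le_dimH_of_holderWith_surjOn_Icc {Y : Type*} [EMetricSpace Y] {f : Y → ℝ} {C r : ℝ≥0}
    (hf : HolderWith C r f) (hr : 0 < r) {s : Set Y} {a b : ℝ} (hab : a < b)
    (hs : SurjOn f s (Icc a b)) : (r : ℝ≥0∞) ≤ dimH s := by
  have hIcc : dimH (Icc a b) = 1 := by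
    simpa using Real.dimH_of_nonempty_interior (by simpa using hab : (interior (Icc a b)).Nonempty)
  have h1 : 1 ≤ dimH s / r :=
    hIcc ▸ (dimH_mono hs).trans ((hf.holderOnWith s).dimH_image_le hr)
  rwa [ENNReal.le_div_iff_mul_le (Or.inl (by exact_mod_cast hr.ne')) (Or.inl ENNReal.coe_ne_top),
    one_mul] at h1

lemma rpow_div_eq_pow {Ψ α : ℝ} (hΨ : 0 ≤ Ψ) (hα : α ≠ 0) (m : ℕ) :
    (Ψ ^ α) ^ ((m : ℝ) / α) = Ψ ^ m := by
  rw [← Real.rpow_mul hΨ, mul_div_cancel₀ _ hα, Real.rpow_natCast]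

section Cylinders

variable {X Y : Type*} [MetricSpace Y] {Ψ C : ℝ}

lemma compactSpace_of_dist_le_div_pow [TopologicalSpace X] [DiscreteTopology X] [CompactSpace X]
    (e : Y ≃ (ℕ → X)) (hΨ : 1 < Ψ)
    (hC : ∀ m a b, (∀ k < m, e a k = e b k) → dist a b ≤ C / Ψ ^ m) : CompactSpace Y := by
  refine e.symm.surjective.compactSpace (continuous_iff_continuousAt.2 fun u => ?_)
  refine Metric.tendsto_nhds.2 fun ε hε => ?_
  obtain ⟨m, hm⟩ := ((tendsto_const_nhds.div_atTop
    (tendsto_pow_atTop_atTop_of_one_lt hΨ)).eventually (gt_mem_nhds hε)).exists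
  have hnear : ∀ᶠ v in 𝓝 u, ∀ k ∈ Iio m, v k = u k :=
    (finite_Iio m).eventually_all.2 fun k _ =>
      ((continuous_apply k).tendsto u).eventually_mem ((isOpen_discrete {u k}).mem_nhds rfl)
  filter_upwards [hnear] with v hv
  exact (hC m _ _ (by simpa using hv)).trans_lt hm

lemma hausdorffMeasure_univ_eq_zero_of_dist_le_div_pow [Fintype X] [MeasurableSpace Y]
    [BorelSpace Y] (e : Y → ℕ → X) (hΨ : 1 < Ψ) (hC0 : 0 ≤ C)
    (hC : ∀ m a b, (∀ k < m, e a k = e b k) → dist a b ≤ C / Ψ ^ m)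
    {d : ℝ≥0} (hd : (Fintype.card X : ℝ) < Ψ ^ (d : ℝ)) : μH[d] (univ : Set Y) = 0 := by
  set cyl : ∀ m : ℕ, (Fin m → X) → Set Y := fun m w => {a | ∀ k : Fin m, e a k = w k}
  have hΨ0 : 0 < Ψ := zero_lt_one.trans hΨ
  have hdiam : ∀ m w, Metric.ediam (cyl m w) ≤ ENNReal.ofReal (C / Ψ ^ m) := fun m w =>
    Metric.ediam_le fun a ha b hb => by
      rw [edist_dist]
      exact ENNReal.ofReal_le_ofReal <| hC m a b fun k hk => (ha ⟨k, hk⟩).trans (hb ⟨k, hk⟩).symm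
  have hcover : ∀ m, (univ : Set Y) ⊆ ⋃ w, cyl m w := fun m a _ =>
    mem_iUnion.2 ⟨fun k => e a k, fun _ => rfl⟩
  have hsum : ∀ m, ∑ w, Metric.ediam (cyl m w) ^ (d : ℝ) ≤
      ENNReal.ofReal (C ^ (d : ℝ) * (Fintype.card X / Ψ ^ (d : ℝ)) ^ m) := fun m =>
    calc ∑ w, Metric.ediam (cyl m w) ^ (d : ℝ)
        ≤ ∑ _w : Fin m → X, ENNReal.ofReal (C / Ψ ^ m) ^ (d : ℝ) :=
          Finset.sum_le_sum fun w _ => ENNReal.rpow_le_rpow (hdiam m w) d.coe_nonneg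
      _ = ENNReal.ofReal (C ^ (d : ℝ) * (Fintype.card X / Ψ ^ (d : ℝ)) ^ m) := by
          rw [Finset.sum_const, Finset.card_univ, Fintype.card_fun, Fintype.card_fin,
            ENNReal.ofReal_rpow_of_nonneg (by positivity) d.coe_nonneg, nsmul_eq_mul,
            ← ENNReal.ofReal_natCast, ← ENNReal.ofReal_mul (by positivity)]
          congr 1
          rw [Real.div_rpow hC0 (by positivity), ← Real.rpow_pow_comm hΨ0.le]
          push_cast
          ring
  have hgeom : Tendsto (fun m : ℕ => ENNReal.ofReal
      (C ^ (d : ℝ) * (Fintype.card X / Ψ ^ (d : ℝ)) ^ m)) atTop (𝓝 0) := by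
    rw [← ENNReal.ofReal_zero, ← mul_zero (C ^ (d : ℝ))]
    exact ENNReal.tendsto_ofReal <| (tendsto_pow_atTop_nhds_zero_of_lt_one (by positivity)
      ((div_lt_one (by positivity)).2 hd)).const_mul _
  have hradius : Tendsto (fun m : ℕ => ENNReal.ofReal (C / Ψ ^ m)) atTop (𝓝 0) := by
    rw [← ENNReal.ofReal_zero]
    exact ENNReal.tendsto_ofReal
      (tendsto_const_nhds.div_atTop (tendsto_pow_atTop_atTop_of_one_lt hΨ))
  refine le_antisymm ?_ bot_le
  calc μH[d] (univ : Set Y)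
      ≤ liminf (fun m => ∑ w, Metric.ediam (cyl m w) ^ (d : ℝ)) atTop :=
        Measure.hausdorffMeasure_le_liminf_sum _ _ _ hradius cyl (.of_forall hdiam)
          (.of_forall hcover)
    _ ≤ liminf (fun m : ℕ => ENNReal.ofReal
          (C ^ (d : ℝ) * (Fintype.card X / Ψ ^ (d : ℝ)) ^ m)) atTop :=
        liminf_le_liminf (.of_forall hsum)
    _ = 0 := hgeom.liminf_eq

lemma dimH_univ_le_of_dist_le_div_pow [Fintype X] (e : Y → ℕ → X) (hΨ : 1 < Ψ) (hC0 : 0 ≤ C)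
    (hC : ∀ m a b, (∀ k < m, e a k = e b k) → dist a b ≤ C / Ψ ^ m)
    {α : ℝ} (hcard : (Fintype.card X : ℝ) = Ψ ^ α) :
    dimH (univ : Set Y) ≤ ENNReal.ofReal α := by
  borelize Y
  refine dimH_le fun d hd => ?_
  by_contra! hlt
  rw [← ENNReal.ofReal_coe_nnreal, ENNReal.ofReal_lt_ofReal_iff'] at hlt
  have hdlt : (Fintype.card X : ℝ) < Ψ ^ (d : ℝ) :=
    hcard ▸ Real.rpow_lt_rpow_of_exponent_lt hΨ hlt.1
  simp [hausdorffMeasure_univ_eq_zero_of_dist_le_div_pow e hΨ hC0 hC hdlt] at hd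

lemma abs_ofDigits_sub_le_of_div_pow_le_dist {b : ℕ} (e : Y → ℕ → Fin b) (hΨ : 0 < Ψ)
    {α δ : ℝ} (hα : 0 ≤ α) (hb : (b : ℝ) = Ψ ^ α) (hδ : 0 < δ)
    (hsep : ∀ m a a', (∀ k < m, e a k = e a' k) → e a m ≠ e a' m → δ / Ψ ^ m ≤ dist a a')
    (a a' : Y) :
    |Real.ofDigits (e a) - Real.ofDigits (e a')| ≤ δ ^ (-α) * dist a a' ^ α := by
  by_cases h : e a = e a'
  · rw [h, sub_self, abs_zero]
    positivity
  obtain ⟨m, hagree, hne⟩ := exists_forall_lt_eq_and_ne h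
  calc |Real.ofDigits (e a) - Real.ofDigits (e a')|
      ≤ ((b : ℝ) ^ m)⁻¹ := Real.abs_ofDigits_sub_ofDigits_le hagree
    _ = δ ^ (-α) * (δ / Ψ ^ m) ^ α := by
        rw [Real.div_rpow hδ.le (by positivity), ← Real.rpow_pow_comm hΨ.le, ← hb,
          Real.rpow_neg hδ.le]
        have : δ ^ α ≠ 0 := (Real.rpow_pos_of_pos hδ α).ne'
        field_simp
    _ ≤ δ ^ (-α) * dist a a' ^ α := by
        gcongr ?_ * ?_ ^ α
        exact hsep m a a' hagree hne

lemma ofReal_le_dimH_univ_of_div_pow_le_dist [Fintype X] (e : Y → ℕ → X)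
    (he : Function.Surjective e) (hΨ : 0 < Ψ) {α δ : ℝ} (hα : 0 < α)
    (hcard : (Fintype.card X : ℝ) = Ψ ^ α) (hX : 1 < Fintype.card X) (hδ : 0 < δ)
    (hsep : ∀ m a b, (∀ k < m, e a k = e b k) → e a m ≠ e b m → δ / Ψ ^ m ≤ dist a b) :
    ENNReal.ofReal α ≤ dimH (univ : Set Y) := by
  set c := Fintype.equivFin X
  set digits : Y → ℕ → Fin (Fintype.card X) := fun a k => c (e a k)
  have hholder : HolderWith (δ ^ (-α)).toNNReal α.toNNReal (Real.ofDigits ∘ digits) :=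
    HolderWith.of_dist_le fun a a' => by
      rw [Real.dist_eq, Real.coe_toNNReal _ (by positivity), Real.coe_toNNReal _ hα.le]
      refine abs_ofDigits_sub_le_of_div_pow_le_dist digits hΨ hα.le hcard hδ
        (fun m a a' h hm => hsep m a a' (fun k hk => c.injective (h k hk)) ?_) a a'
      exact fun h' => hm (congrArg c h')
  have hsurj : SurjOn (Real.ofDigits ∘ digits) univ (Icc 0 1) := by
    intro t ht
    obtain ⟨u, -, hu⟩ := Real.ofDigits_SurjOn hX ht
    obtain ⟨a, ha⟩ := he fun k => c.symm (u k)
    exact ⟨a, mem_univ _, by simp [digits, ha, hu]⟩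
  exact le_dimH_of_holderWith_surjOn_Icc hholder (Real.toNNReal_pos.2 hα) zero_lt_one hsurj

end Cylinders

section SelfSimDist

variable {X : Type*} [MetricSpace X] {n : ℕ} {α Ψ : ℝ} {x y : ℕ → X} {m : ℕ}

lemma selfSimDist_eq_div_pow (hΨ : 0 ≤ Ψ) (hα : α ≠ 0) (hn : (n : ℝ) = Ψ ^ α)
    (h : ∀ k < m, x k = y k) (hm : x m ≠ y m) :
    selfSimDist n α x y = dist (x m) (y m) / Ψ ^ m := by
  have hxy : x ≠ y := fun h' => hm (congrFun h' m)
  have hfind : Nat.find (Function.ne_iff.mp hxy) = m :=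
    (Nat.find_eq_iff _).2 ⟨hm, fun k hk => not_not.2 (h k hk)⟩
  rw [selfSimDist, dif_neg hxy, hfind, hn, rpow_div_eq_pow hΨ hα]

lemma selfSimDist_le_div_pow (hΨ : 1 ≤ Ψ) (hα : α ≠ 0) (hn : (n : ℝ) = Ψ ^ α) {D : ℝ}
    (hD : ∀ p q : X, dist p q ≤ D) (h : ∀ k < m, x k = y k) :
    selfSimDist n α x y ≤ D / Ψ ^ m := by
  have hD0 : 0 ≤ D := dist_self (x 0) ▸ hD _ _
  by_cases hxy : x = y
  · rw [selfSimDist, dif_pos hxy]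
    positivity
  obtain ⟨m', hagree, hne⟩ := exists_forall_lt_eq_and_ne hxy
  have hmm' : m ≤ m' := not_lt.1 fun hlt => hne (h m' hlt)
  rw [selfSimDist_eq_div_pow (zero_le_one.trans hΨ) hα hn hagree hne]
  exact div_le_div₀ hD0 (hD _ _) (by positivity) (pow_le_pow_right₀ hΨ hmm')

end SelfSimDist

theorem stmt15_general {X : Type*} [Fintype X] [MetricSpace X]
    {Y : Type*} [MetricSpace Y]
    (n : ℕ) (hn : n = Fintype.card X) (hn2 : 2 ≤ n)
    (hdiam : Metric.diam (Set.univ : Set X) = 1)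
    (δ : ℝ) (hδpos : 0 < δ)
    (hδ_min : ∀ x y : X, x ≠ y → δ ≤ dist x y)
    (Ψ : ℝ) (hΨ : 1 / δ < Ψ)
    (α : ℝ) (hα : α = Real.log n / Real.log Ψ)
    (e : Y ≃ (ℕ → X))
    (hdist : ∀ a b : Y, dist a b = selfSimDist n α (e a) (e b)) :
    CompactSpace Y ∧
      dimH (Set.univ : Set Y) = ENNReal.ofReal (Real.log n / Real.log Ψ) := by
  have hdist_le : ∀ p q : X, dist p q ≤ 1 := fun p q =>
    hdiam ▸ Metric.dist_le_diam_of_mem finite_univ.isBounded (mem_univ p) (mem_univ q)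
  have hX : 1 < Fintype.card X := hn ▸ hn2
  have hΨ1 : 1 < Ψ := by
    obtain ⟨p, q, hpq⟩ := Fintype.exists_pair_of_one_lt_card hX
    exact (one_le_one_div hδpos ((hδ_min p q hpq).trans (hdist_le p q))).trans_lt hΨ
  have hn1 : (1 : ℝ) < n := by exact_mod_cast hn2
  have hα0 : 0 < α := hα ▸ div_pos (Real.log_pos hn1) (Real.log_pos hΨ1)
  have hnΨ : (n : ℝ) = Ψ ^ α := by
    rw [hα, Real.log_div_log, Real.rpow_logb (by linarith) hΨ1.ne' (by linarith)]
  have hcyl : ∀ m a b, (∀ k < m, e a k = e b k) → dist a b ≤ 1 / Ψ ^ m := fun m a b h =>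
    (hdist a b).trans_le (selfSimDist_le_div_pow hΨ1.le hα0.ne' hnΨ hdist_le h)
  have hsep : ∀ m a b, (∀ k < m, e a k = e b k) → e a m ≠ e b m → δ / Ψ ^ m ≤ dist a b := by
    intro m a b h hm
    rw [hdist, selfSimDist_eq_div_pow (by linarith) hα0.ne' hnΨ h hm]
    exact div_le_div_of_nonneg_right (hδ_min _ _ hm) (by positivity)
  have hcard : (Fintype.card X : ℝ) = Ψ ^ α := hn ▸ hnΨ
  refine ⟨compactSpace_of_dist_le_div_pow e hΨ1 hcyl, ?_⟩
  rw [← hα]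
  exact le_antisymm (dimH_univ_le_of_dist_le_div_pow e hΨ1 zero_le_one hcyl hcard)
    (ofReal_le_dimH_univ_of_div_pow_le_dist e e.surjective (by linarith) hα0 hcard hX hδpos hsep)

/-- Let `(X,d)` be a finite metric space with `n = |X| ≥ 2` points,
diameter `1` and minimal positive distance `δ`, and let `Ψ > 1/δ`. Then `X^ℕ` with the
self-similar metric `ρ` (scaling by `n^{−(k−1)/α}`, `α = log n / log Ψ`) is a compact
metric space of Hausdorff dimension exactly `log_Ψ n`. -/
theorem stmt15 {X : Type*} [Fintype X] [MetricSpace X]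
    {Y : Type*} [MetricSpace Y] [MeasurableSpace Y] [BorelSpace Y]
    (n : ℕ) (hn : n = Fintype.card X) (hn2 : 2 ≤ n)
    (hdiam : Metric.diam (Set.univ : Set X) = 1)
    (δ : ℝ) (hδpos : 0 < δ)
    (hδ_min : ∀ x y : X, x ≠ y → δ ≤ dist x y)
    (hδ_att : ∃ x y : X, x ≠ y ∧ dist x y = δ)
    (Ψ : ℝ) (hΨ : 1 / δ < Ψ)
    (α : ℝ) (hα : α = Real.log n / Real.log Ψ)
    (e : Y ≃ (ℕ → X))
    (hdist : ∀ a b : Y, dist a b = selfSimDist n α (e a) (e b)) :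
    CompactSpace Y ∧
      dimH (Set.univ : Set Y) = ENNReal.ofReal (Real.log n / Real.log Ψ) :=
  stmt15_general n hn hn2 hdiam δ hδpos hδ_min Ψ hΨ α hα e hdist
end

section
/- Fix k ≥ 2 and real numbers f_1, …, f_k ≥ 0 associated to each child v of a vertex u in a finite tree as follows: suppose w : {children of u} → (0,∞) and for each child v, nonnegative numbers f_1(v),…,f_k(v) satisfy ∏_{i=1}^k f_i(v) ≥ w(v)^(k−1). Let j ∈ {1,…,k}. Then (max_v f_j(v)) · ∏_{i≠j} (∑_v f_i(v)) ≥ (∑_v ∏_{i=1}^k f_i(v)^(1/(k−1)))^(k−1) ≥ (∑_v w(v))^(k−1). -/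
/-!
Write `r = 1/(k-1)`. Bounding `f_j(v)` by its maximum `M` leaves the sum over `v` of a product of
the `k-1` functions `f_i^r`, `i ≠ j`, which Hölder's inequality with equal exponents bounds by
`∏_{i≠j} (∑_v f_i(v))^r`; raising to the power `k-1` gives the first inequality. The second is
termwise: `∏_i f_i(v)^r = (∏_i f_i(v))^r ≥ (w(v)^(k-1))^r = w(v)`.
-/

open Finset

theorem Real.sum_prod_rpow_le_prod_sum_rpow {ι α : Type*} (s : Finset ι) (t : Finset α)
    (g : ι → α → ℝ) (hg : ∀ i ∈ s, ∀ a ∈ t, 0 ≤ g i a) (p : ι → ℝ) (hp : ∀ i ∈ s, 0 ≤ p i)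
    (hp_sum : ∑ i ∈ s, p i = 1) :
    ∑ a ∈ t, ∏ i ∈ s, g i a ^ p i ≤ ∏ i ∈ s, (∑ a ∈ t, g i a) ^ p i := by
  set S : ι → ℝ := fun i ↦ ∑ a ∈ t, g i a
  set P := ∏ i ∈ s, S i ^ p i
  have hS : ∀ i ∈ s, 0 ≤ S i := fun i hi ↦ sum_nonneg (hg i hi)
  have hP : 0 ≤ P := prod_nonneg fun i hi ↦ Real.rpow_nonneg (hS i hi) _
  have hrescale : ∀ i ∈ s, ∀ a ∈ t, S i * (g i a / S i) = g i a := by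
    intro i hi a ha
    rcases eq_or_ne (S i) 0 with hSi | hSi
    · have : g i a = 0 := (sum_eq_zero_iff_of_nonneg (hg i hi)).1 hSi a ha
      simp [this]
    · exact mul_div_cancel₀ _ hSi
  -- After normalising each `g i` to total mass one, weighted AM-GM applies pointwise.
  have hpoint : ∀ a ∈ t,
      ∏ i ∈ s, g i a ^ p i ≤ P * ∑ i ∈ s, p i * (g i a / S i) := by
    intro a ha
    have hnorm : ∀ i ∈ s, 0 ≤ g i a / S i := fun i hi ↦ div_nonneg (hg i hi a ha) (hS i hi)
    calc ∏ i ∈ s, g i a ^ p i = P * ∏ i ∈ s, (g i a / S i) ^ p i := by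
          rw [← prod_mul_distrib]
          refine prod_congr rfl fun i hi ↦ ?_
          rw [← Real.mul_rpow (hS i hi) (hnorm i hi), hrescale i hi a ha]
      _ ≤ P * ∑ i ∈ s, p i * (g i a / S i) :=
          mul_le_mul_of_nonneg_left
            (Real.geom_mean_le_arith_mean_weighted s p _ hp hp_sum hnorm) hP
  have hmass : ∑ a ∈ t, ∑ i ∈ s, p i * (g i a / S i) ≤ 1 := by
    calc ∑ a ∈ t, ∑ i ∈ s, p i * (g i a / S i) = ∑ i ∈ s, p i * (S i / S i) := by
          rw [sum_comm]
          simp only [← mul_sum, ← sum_div, S]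
      _ ≤ ∑ i ∈ s, p i :=
          sum_le_sum fun i hi ↦ mul_le_of_le_one_right (hp i hi) (div_self_le_one _)
      _ = 1 := hp_sum
  calc ∑ a ∈ t, ∏ i ∈ s, g i a ^ p i ≤ ∑ a ∈ t, P * ∑ i ∈ s, p i * (g i a / S i) :=
        sum_le_sum hpoint
    _ = P * ∑ a ∈ t, ∑ i ∈ s, p i * (g i a / S i) := (mul_sum ..).symm
    _ ≤ P := mul_le_of_le_one_right hP hmass

theorem Real.le_prod_rpow_inv_of_pow_le_prod {κ : Type*} (s : Finset κ) {x : ℝ} {n : ℕ}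
    (f : κ → ℝ) (hx : 0 ≤ x) (hf : ∀ i ∈ s, 0 ≤ f i) (hn : n ≠ 0)
    (hxf : x ^ n ≤ ∏ i ∈ s, f i) :
    x ≤ ∏ i ∈ s, f i ^ (n⁻¹ : ℝ) := by
  rw [Real.finsetProd_rpow s f hf, Real.le_rpow_inv_iff_of_pos hx (prod_nonneg hf)
    (by positivity), Real.rpow_natCast]
  exact hxf

theorem Real.sum_prod_rpow_inv_pow_le_sup'_mul_prod_sum {ι κ : Type*} [Fintype ι] [Nonempty ι]
    [Fintype κ] [DecidableEq κ] {n : ℕ} (hκ : Fintype.card κ = n + 1) (hn : n ≠ 0)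
    (f : κ → ι → ℝ) (hf : ∀ i v, 0 ≤ f i v) (j : κ) :
    (∑ v, ∏ i, f i v ^ (n⁻¹ : ℝ)) ^ n ≤
      univ.sup' univ_nonempty (f j) * ∏ i ∈ univ.erase j, ∑ v, f i v := by
  set M := univ.sup' univ_nonempty (f j)
  have hM : 0 ≤ M := (hf j (Classical.arbitrary ι)).trans (le_sup' (f j) (mem_univ _))
  have hmax : ∀ v,
      ∏ i, f i v ^ (n⁻¹ : ℝ) ≤ M ^ (n⁻¹ : ℝ) * ∏ i ∈ univ.erase j, f i v ^ (n⁻¹ : ℝ) := by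
    intro v
    rw [← mul_prod_erase univ _ (mem_univ j)]
    gcongr
    · exact prod_nonneg fun i _ ↦ Real.rpow_nonneg (hf i v) _
    · exact hf j v
    · exact le_sup' (f j) (mem_univ v)
  have hholder := Real.sum_prod_rpow_le_prod_sum_rpow (univ.erase j) univ f
    (fun i _ v _ ↦ hf i v) (fun _ ↦ (n⁻¹ : ℝ)) (fun _ _ ↦ by positivity)
    (by rw [sum_const, card_erase_of_mem (mem_univ j), card_univ, hκ, nsmul_eq_mul]
        field_simp; simp)
  have hsums : ∀ i ∈ univ.erase j, 0 ≤ ∑ v, f i v := fun i _ ↦ sum_nonneg fun v _ ↦ hf i v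
  have hroot : ∑ v, ∏ i, f i v ^ (n⁻¹ : ℝ) ≤ (M * ∏ i ∈ univ.erase j, ∑ v, f i v) ^ (n⁻¹ : ℝ) :=
    calc ∑ v, ∏ i, f i v ^ (n⁻¹ : ℝ)
        ≤ ∑ v, M ^ (n⁻¹ : ℝ) * ∏ i ∈ univ.erase j, f i v ^ (n⁻¹ : ℝ) :=
          sum_le_sum fun v _ ↦ hmax v
      _ = M ^ (n⁻¹ : ℝ) * ∑ v, ∏ i ∈ univ.erase j, f i v ^ (n⁻¹ : ℝ) := (mul_sum ..).symm
      _ ≤ M ^ (n⁻¹ : ℝ) * ∏ i ∈ univ.erase j, (∑ v, f i v) ^ (n⁻¹ : ℝ) := by gcongr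
      _ = (M * ∏ i ∈ univ.erase j, ∑ v, f i v) ^ (n⁻¹ : ℝ) := by
          rw [Real.finsetProd_rpow _ _ hsums, Real.mul_rpow hM (prod_nonneg hsums)]
  rwa [Real.le_rpow_inv_iff_of_pos (sum_nonneg fun v _ ↦ prod_nonneg fun i _ ↦
    Real.rpow_nonneg (hf i v) _) (mul_nonneg hM (prod_nonneg hsums)) (by positivity),
    Real.rpow_natCast] at hroot

/-- The inductive Hölder step: if `∏ᵢ fᵢ(v) ≥ w(v)^(k−1)` for every child
`v`, then for each `j`,
`(max_v f_j(v)) · ∏_{i≠j} ∑_v fᵢ(v) ≥ (∑_v ∏ᵢ fᵢ(v)^(1/(k−1)))^(k−1) ≥ (∑_v w(v))^(k−1)`. -/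
theorem stmt19 {ι : Type*} [Fintype ι] [Nonempty ι] (k : ℕ) (hk : 2 ≤ k)
    (w : ι → ℝ) (hw : ∀ v, 0 < w v) (f : Fin k → ι → ℝ) (hf : ∀ i v, 0 ≤ f i v)
    (hprod : ∀ v, w v ^ (k - 1) ≤ ∏ i, f i v) (j : Fin k) :
    (∑ v, ∏ i, f i v ^ ((1 : ℝ) / ((k : ℝ) - 1))) ^ (k - 1) ≤
        (Finset.univ.sup' Finset.univ_nonempty (f j)) *
          ∏ i ∈ Finset.univ.erase j, ∑ v, f i v ∧
      (∑ v, w v) ^ (k - 1) ≤ (∑ v, ∏ i, f i v ^ ((1 : ℝ) / ((k : ℝ) - 1))) ^ (k - 1) := by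
  have hn : k - 1 ≠ 0 := by omega
  have hexp : (1 : ℝ) / ((k : ℝ) - 1) = ((k - 1 : ℕ) : ℝ)⁻¹ := by
    rw [Nat.cast_pred (by omega), one_div]
  rw [hexp]
  refine ⟨Real.sum_prod_rpow_inv_pow_le_sup'_mul_prod_sum (by simp; omega) hn f hf j, ?_⟩
  refine pow_le_pow_left₀ (sum_nonneg fun v _ ↦ (hw v).le) (sum_le_sum fun v _ ↦ ?_) _
  exact Real.le_prod_rpow_inv_of_pow_le_prod _ _ (hw v).le (fun i _ ↦ hf i v) hn (hprod v)
end
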